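/- arXiv:2311.02717 — 3 statements merged into one kernel-verified Lean document; each statement's English description precedes it below -/
import Mathlib

section
/- Let φ be a measure function such that lim_{t→0+} φ(t)/t^s = 0 for every 0 < s < 1. Then there exist a finite Blaschke product f with f(0) = 0 which is not a rotation and a sequence (a_n) of complex numbers tending to zero with Σ_n |a_n| = ∞, such that for every w ∈ ℂ the set A(w) = {ξ ∈ ∂𝔻 : Σ_{n=1}^∞ a_n f^n(ξ) converges and Σ_{n=1}^∞ a_n f^n(ξ) = w} has Hausdorff measure H^φ(A(w)) = 0. -/
open MeasureTheory Filter
open scoped Classical ENNReal Topology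

noncomputable section

/-- The unit circle `∂𝔻 ⊆ ℂ`. -/
def uc : Set ℂ := {z : ℂ | ‖z‖ = 1}

/-- Parametrization of the unit circle by normalised arclength. -/
def pc (t : ℝ) : ℂ := Complex.exp (2 * Real.pi * Complex.I * t)

/-- Normalised arclength measure on the unit circle, as a measure on `ℂ`. -/
def μc : Measure ℂ := Measure.map pc (volume.restrict (Set.Ico (0:ℝ) 1))

/-- Normalised length of a subset of the circle. -/
def mA (S : Set ℂ) : ℝ := (μc S).toReal

/-- Closed arc centered at `ξ` (a point of the circle) with normalised length `ℓ`
(the whole circle if `ℓ ≥ 1`). -/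
def carc (ξ : ℂ) (ℓ : ℝ) : Set ℂ :=
  if 1 ≤ ℓ then uc
  else pc '' Set.Icc (Complex.arg ξ / (2 * Real.pi) - ℓ / 2)
                     (Complex.arg ξ / (2 * Real.pi) + ℓ / 2)

/-- A (nondegenerate or degenerate) closed arc of the circle. -/
def IsClosedArc (I : Set ℂ) : Prop := ∃ ξ ∈ uc, ∃ ℓ : ℝ, 0 ≤ ℓ ∧ I = carc ξ ℓ

/-- The arc `I(z)`: centered at `z/|z|` with normalised length `1 - |z|`. -/
def Iarc (z : ℂ) : Set ℂ := if z = 0 then uc else carc (z / ‖z‖) (1 - ‖z‖)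

/-- The arc `dI(z)`: concentric to `I(z)`, of length `min (d(1-|z|)) 1`. -/
def dIarc (d : ℕ) (z : ℂ) : Set ℂ := if z = 0 then uc else carc (z / ‖z‖) (d * (1 - ‖z‖))

/-- Finite Blaschke product fixing the origin. -/
def IsFBP (f : ℂ → ℂ) : Prop :=
  ∃ (α : ℂ) (m J : ℕ) (zs : Fin J → ℂ),
    ‖α‖ = 1 ∧ 1 ≤ m ∧ (∀ j, ‖zs j‖ < 1) ∧
    ∀ w : ℂ, f w = α * w ^ m * ∏ j, (w - zs j) / (1 - (starRingEnd ℂ) (zs j) * w)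

/-- Finite Blaschke product fixing the origin which is not a rotation (degree ≥ 2). -/
def IsFBPN (f : ℂ → ℂ) : Prop :=
  ∃ (α : ℂ) (m J : ℕ) (zs : Fin J → ℂ),
    ‖α‖ = 1 ∧ 1 ≤ m ∧ 2 ≤ m + J ∧ (∀ j, ‖zs j‖ < 1) ∧
    ∀ w : ℂ, f w = α * w ^ m * ∏ j, (w - zs j) / (1 - (starRingEnd ℂ) (zs j) * w)

/-- Measure function: vanishing at `0`, strictly increasing, right-continuous. -/
def IsMeasureFunction (φ : ℝ → ℝ) : Prop :=
  φ 0 = 0 ∧ StrictMonoOn φ (Set.Ici 0) ∧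
    ∀ t ∈ Set.Ici (0:ℝ), ContinuousWithinAt φ (Set.Ici t) t

/-- `φ`-Hausdorff measure on the circle, via countable covers by arcs. -/
def Hmeas (φ : ℝ → ℝ) (E : Set ℂ) : ℝ≥0∞ :=
  ⨆ (δ : ℝ) (_ : 0 < δ),
    ⨅ (ξ : ℕ → ℂ) (ℓ : ℕ → ℝ) (_ : ∀ n, 0 ≤ ℓ n ∧ ℓ n < δ)
      (_ : E ⊆ ⋃ n, carc (ξ n) (ℓ n)),
      ∑' n, ENNReal.ofReal (φ (ℓ n))

/-- `min {|f'(ξ)| : ξ ∈ ∂𝔻}`. -/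
def C0min (f : ℂ → ℂ) : ℝ := sInf ((fun ξ => ‖deriv f ξ‖) '' uc)

/-- Generalised inverse of `ψ(t) = φ(t)/t`: `ψ⁻¹(t) = inf {s > 0 : ψ(s) > t}`. -/
def psiInv (φ : ℝ → ℝ) (t : ℝ) : ℝ := sInf {s : ℝ | 0 < s ∧ t < φ s / s}

/-- The set `A(w)` of boundary points where `∑ aₙ fⁿ` converges to `w`. -/
def Aset (f : ℂ → ℂ) (a : ℕ → ℂ) (w : ℂ) : Set ℂ :=
  {ξ : ℂ | ξ ∈ uc ∧
    Tendsto (fun L => ∑ n ∈ Finset.Icc 1 L, a n * (f^[n] ξ)) atTop (𝓝 w)}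


namespace OC

/-- block parameter -/
def rk (k : ℕ) : ℕ := 8 * (k + 1)

lemma rk_pos (k : ℕ) : 0 < rk k := by simp [rk]
lemma two_le_two_pow_rk (k : ℕ) : (2:ℝ) ≤ 2 ^ rk k := by
  calc (2:ℝ) = 2 ^ 1 := (pow_one 2).symm
    _ ≤ 2 ^ rk k := pow_le_pow_right₀ one_le_two (rk_pos k)

/-- the exponent s_k -/
def sk (k : ℕ) : ℝ := Real.logb 2 ((2:ℝ) ^ rk k - 1/2) / (rk k : ℝ)

lemma sk_key (k : ℕ) : (2:ℝ) ^ ((rk k : ℝ) * sk k) = (2:ℝ) ^ rk k - 1/2 := by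
  have h1 : (2:ℝ) ≤ (2:ℝ) ^ rk k := two_le_two_pow_rk k
  have hr : (rk k : ℝ) ≠ 0 := Nat.cast_ne_zero.mpr ((by simp [rk]))
  rw [sk, mul_div_cancel₀ _ hr]
  exact Real.rpow_logb (by norm_num) (by norm_num) (by linarith)

lemma sk_pos (k : ℕ) : 0 < sk k := by
  have h1 : (2:ℝ) ≤ (2:ℝ) ^ rk k := two_le_two_pow_rk k
  apply div_pos (Real.logb_pos one_lt_two (by linarith))
  exact_mod_cast rk_pos k

lemma sk_lt_one (k : ℕ) : sk k < 1 := by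
  have h1 : (2:ℝ) ≤ (2:ℝ) ^ rk k := two_le_two_pow_rk k
  have hr : (0:ℝ) < (rk k : ℝ) := by exact_mod_cast rk_pos k
  rw [sk, div_lt_one hr]
  have h2 : Real.logb 2 ((2:ℝ) ^ rk k - 1/2) < Real.logb 2 ((2:ℝ) ^ rk k) :=
    Real.logb_lt_logb one_lt_two (by linarith) (by linarith)
  calc Real.logb 2 ((2:ℝ) ^ rk k - 1/2) < Real.logb 2 ((2:ℝ) ^ rk k) := h2
    _ = rk k := by
        rw [← Real.rpow_natCast 2 (rk k)]
        exact Real.logb_rpow (by norm_num) (by norm_num)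

/-- the contraction factor -/
def ck (k : ℕ) : ℝ := ((2:ℝ) ^ rk k - 1) * ((1/2:ℝ) ^ rk k) ^ (sk k)

lemma half_pow_rpow (n : ℕ) (s : ℝ) : (((1/2:ℝ) ^ n) ^ s) = ((2:ℝ) ^ ((n:ℝ) * s))⁻¹ := by
  have h2 : (0:ℝ) ≤ 2 := by norm_num
  rw [one_div, inv_pow, ← Real.rpow_natCast 2 n, Real.inv_rpow (by positivity),
    ← Real.rpow_mul h2]

lemma ck_pos (k : ℕ) : 0 < ck k := by
  have h1 : (2:ℝ) ≤ (2:ℝ) ^ rk k := two_le_two_pow_rk k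
  have h2 : (0:ℝ) < ((1/2:ℝ) ^ rk k) ^ (sk k) := Real.rpow_pos_of_pos (by positivity) _
  exact mul_pos (by linarith) h2

lemma ck_lt_one (k : ℕ) : ck k < 1 := by
  have h1 : (2:ℝ) ≤ (2:ℝ) ^ rk k := two_le_two_pow_rk k
  have hkey := sk_key k
  rw [ck, half_pow_rpow, hkey, ← div_eq_mul_inv, div_lt_one (by linarith)]
  linarith

variable (φ : ℝ → ℝ)

/-- threshold below which `φ t ≤ t ^ sk k`. -/
def t0 (k : ℕ) : ℝ :=
  if h : ∃ t : ℝ, 0 < t ∧ ∀ τ : ℝ, 0 < τ → τ ≤ t → φ τ ≤ τ ^ (sk k) then h.choose else 1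

lemma t0_pos (k : ℕ) : 0 < t0 φ k := by
  rw [t0]
  split
  · next h => exact h.choose_spec.1
  · norm_num

lemma t0_spec
    (hs : ∀ s : ℝ, 0 < s → s < 1 →
      Tendsto (fun t => φ t / t ^ s) (nhdsWithin 0 (Set.Ioi 0)) (𝓝 0))
    (k : ℕ) : ∀ τ : ℝ, 0 < τ → τ ≤ t0 φ k → φ τ ≤ τ ^ (sk k) := by
  have hex : ∃ t : ℝ, 0 < t ∧ ∀ τ : ℝ, 0 < τ → τ ≤ t → φ τ ≤ τ ^ (sk k) := by
    have h1 := hs (sk k) (sk_pos k) (sk_lt_one k)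
    have h2 : ∀ᶠ t in nhdsWithin 0 (Set.Ioi 0), φ t / t ^ (sk k) < 1 :=
      h1.eventually (Filter.Tendsto.eventually_lt_const one_pos tendsto_id) |>.mono (fun x h => h)
    rw [eventually_nhdsWithin_iff] at h2
    rw [Metric.eventually_nhds_iff] at h2
    obtain ⟨ε, hε, hb⟩ := h2
    refine ⟨ε/2, by linarith, fun τ hτ hτ2 => ?_⟩
    have hd : dist τ 0 < ε := by
      rw [Real.dist_eq, sub_zero, abs_of_pos hτ]; linarith
    have := hb hd hτ
    have hp : (0:ℝ) < τ ^ (sk k) := Real.rpow_pos_of_pos hτ _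
    exact le_of_lt ((div_lt_one hp).mp this)
  rw [t0, dif_pos hex]
  exact hex.choose_spec.2

/-- conditions on the block length `q` at stage `k`, start `P`. -/
def Cond (k P q : ℕ) : Prop :=
  1 ≤ q ∧
  ((2:ℝ) ^ P * ((2:ℝ) ^ rk k - 1) ^ q) * (((1/2:ℝ) ^ (P + q * rk k)) ^ (sk k)) ≤ (1/2) ^ k ∧
  (1/2:ℝ) ^ (P + q * rk k) ≤ t0 φ k ∧
  k ≤ P + q * rk k

lemma lhsA_eq (k P q : ℕ) :
    ((2:ℝ) ^ P * ((2:ℝ) ^ rk k - 1) ^ q) * (((1/2:ℝ) ^ (P + q * rk k)) ^ (sk k))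
      = ((2:ℝ) ^ P * (((1/2:ℝ) ^ P) ^ (sk k))) * (ck k) ^ q := by
  induction q with
  | zero => simp [ck]
  | succ q ih =>
      have hh : (0:ℝ) ≤ (1/2:ℝ) ^ (P + q * rk k) := by positivity
      have hh2 : (0:ℝ) ≤ (1/2:ℝ) ^ (rk k) := by positivity
      have : (1/2:ℝ) ^ (P + (q+1) * rk k) = (1/2:ℝ) ^ (P + q * rk k) * (1/2)^(rk k) := by
        rw [← pow_add]; ring_nf
      have hck : ck k = (2 ^ rk k - 1) * ((1 / 2) ^ rk k) ^ sk k := rfl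
      rw [this, Real.mul_rpow hh hh2, pow_succ, pow_succ]
      linear_combination ((2 ^ rk k - 1) * ((1 / 2) ^ rk k) ^ sk k) * ih
        - (2 ^ P * ((1 / 2) ^ P) ^ sk k * ck k ^ q) * hck

lemma exists_q (k P : ℕ) : ∃ q : ℕ, Cond φ k P q := by
  set D : ℝ := (2:ℝ) ^ P * (((1/2:ℝ) ^ P) ^ (sk k)) with hD
  have hDpos : 0 < D := by
    have : (0:ℝ) < ((1/2:ℝ) ^ P) ^ (sk k) := Real.rpow_pos_of_pos (by positivity) _
    positivity
  obtain ⟨q₁, hq₁⟩ := exists_pow_lt_of_lt_one (show (0:ℝ) < (1/2)^k / D by positivity) (ck_lt_one k)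
  obtain ⟨q₂, hq₂⟩ := exists_pow_lt_of_lt_one (t0_pos φ k) (show (1/2:ℝ) < 1 by norm_num)
  refine ⟨q₁ + q₂ + k + 1, ?_, ?_, ?_, ?_⟩
  · omega
  · rw [lhsA_eq]
    have h1 : (ck k) ^ (q₁ + q₂ + k + 1) ≤ (ck k) ^ q₁ :=
      pow_le_pow_of_le_one (ck_pos k).le (ck_lt_one k).le (by omega)
    have h2 : D * (ck k) ^ q₁ < D * ((1/2)^k / D) := by
      exact mul_lt_mul_of_pos_left hq₁ hDpos
    rw [mul_div_cancel₀ _ hDpos.ne'] at h2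
    nlinarith [pow_pos (ck_pos k) q₁, pow_pos (ck_pos k) (q₁ + q₂ + k + 1)]
  · have hle : q₂ ≤ P + (q₁ + q₂ + k + 1) * rk k := by
      have := rk_pos k
      calc q₂ ≤ (q₁ + q₂ + k + 1) * 1 := by omega
        _ ≤ P + (q₁ + q₂ + k + 1) * rk k := by
            have : (q₁ + q₂ + k + 1) * 1 ≤ (q₁ + q₂ + k + 1) * rk k :=
              Nat.mul_le_mul_left _ this
            omega
    calc (1/2:ℝ) ^ (P + (q₁ + q₂ + k + 1) * rk k) ≤ (1/2:ℝ) ^ q₂ :=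
          pow_le_pow_of_le_one (by norm_num) (by norm_num) hle
      _ ≤ t0 φ k := hq₂.le
  · have := rk_pos k
    have : (q₁ + q₂ + k + 1) * 1 ≤ (q₁ + q₂ + k + 1) * rk k := Nat.mul_le_mul_left _ this
    omega

/-- block length at stage `k` when starting at `P`. -/
def qf (k P : ℕ) : ℕ := (exists_q φ k P).choose

lemma qf_spec (k P : ℕ) : Cond φ k P (qf φ k P) := (exists_q φ k P).choose_spec

/-- start of block `k`. -/
def Pf : ℕ → ℕ
  | 0 => 1
  | (k+1) => Pf k + qf φ k (Pf k) * rk k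

lemma Pf_succ (k : ℕ) : Pf φ (k+1) = Pf φ k + qf φ k (Pf φ k) * rk k := rfl

lemma Pf_lower (k : ℕ) : k + 1 ≤ Pf φ k := by
  induction k with
  | zero => simp [Pf]
  | succ k ih =>
      have h1 : 1 ≤ qf φ k (Pf φ k) := (qf_spec φ k (Pf φ k)).1
      have h2 := rk_pos k
      have : 1 ≤ qf φ k (Pf φ k) * rk k := Nat.one_le_iff_ne_zero.mpr (by positivity)
      rw [Pf_succ]; omega

lemma Pf_mono : Monotone (Pf φ) := by
  apply monotone_nat_of_le_succ
  intro k
  rw [Pf_succ]; omega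

lemma Pf_pos (k : ℕ) : 1 ≤ Pf φ k := le_trans (by omega) (Pf_lower φ k)

lemma exists_block (n : ℕ) : ∃ k, n < Pf φ (k+1) :=
  ⟨n, by have := Pf_lower φ (n+1); omega⟩

/-- index of the block containing `n`. -/
def Kf (n : ℕ) : ℕ := Nat.find (exists_block φ n)

lemma Kf_eq (k n : ℕ) (h1 : Pf φ k ≤ n) (h2 : n < Pf φ (k+1)) : Kf φ n = k := by
  unfold Kf
  rw [Nat.find_eq_iff]
  refine ⟨h2, fun j hj hc => ?_⟩
  have : Pf φ (j+1) ≤ Pf φ k := Pf_mono φ (by omega)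
  omega

lemma Kf_ge (k n : ℕ) (h : Pf φ k ≤ n) : k ≤ Kf φ n := by
  by_contra hc
  push_neg at hc
  have h2 : n < Pf φ (Kf φ n + 1) := Nat.find_spec (exists_block φ n)
  have h3 : Pf φ (Kf φ n + 1) ≤ Pf φ k := Pf_mono φ (by omega)
  omega

/-- the coefficient sequence. -/
def aseq (n : ℕ) : ℂ := ((1 / (Kf φ n + 1) : ℝ) : ℂ)

lemma aseq_eq (k n : ℕ) (h1 : Pf φ k ≤ n) (h2 : n < Pf φ (k+1)) :
    aseq φ n = ((1 / (k + 1) : ℝ) : ℂ) := by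
  rw [aseq, Kf_eq φ k n h1 h2]
/-! ### circle parametrization lemmas -/

lemma pc_int_add (x : ℝ) (m : ℤ) : pc (x + m) = pc x := by
  rw [pc, pc]
  have h : 2 * (Real.pi:ℂ) * Complex.I * (((x + (m:ℝ)) : ℝ) : ℂ)
      = 2 * Real.pi * Complex.I * (x:ℂ) + (m:ℂ) * (2 * Real.pi * Complex.I) := by
    push_cast; ring
  rw [h, Complex.exp_add, Complex.exp_int_mul_two_pi_mul_I]
  ring

lemma pc_pow (x : ℝ) (n : ℕ) : (pc x) ^ n = pc (n * x) := by
  rw [pc, pc, ← Complex.exp_nat_mul]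
  congr 1
  push_cast; ring

lemma pc_norm (x : ℝ) : ‖pc x‖ = 1 := by
  rw [pc, Complex.norm_exp]
  have : (2 * (Real.pi:ℂ) * Complex.I * x).re = 0 := by simp
  rw [this, Real.exp_zero]

lemma pc_mem_uc (x : ℝ) : pc x ∈ uc := pc_norm x

lemma pc_re (x : ℝ) : (pc x).re = Real.cos (2 * Real.pi * x) := by
  have : 2 * (Real.pi:ℂ) * Complex.I * x = ((2 * Real.pi * x : ℝ) : ℂ) * Complex.I := by
    push_cast; ring
  rw [pc, this, Complex.exp_ofReal_mul_I_re]

lemma pc_fract (x : ℝ) : pc (Int.fract x) = pc x := by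
  have h : Int.fract x = x + ((-⌊x⌋ : ℤ) : ℝ) := by rw [Int.fract]; push_cast; ring
  rw [h, pc_int_add]

lemma uc_eq_pc (ξ : ℂ) (h : ξ ∈ uc) : pc (Int.fract (ξ.arg / (2 * Real.pi))) = ξ := by
  rw [pc_fract, pc]
  have hpi : (Real.pi : ℂ) ≠ 0 := by exact_mod_cast Real.pi_ne_zero
  have h2 : 2 * (Real.pi:ℂ) * Complex.I * ((ξ.arg / (2 * Real.pi) : ℝ) : ℂ)
      = (ξ.arg : ℂ) * Complex.I := by
    push_cast
    field_simp
  rw [h2]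
  have habs : (‖ξ‖ : ℝ) = 1 := by exact h
  have h3 := Complex.norm_mul_exp_arg_mul_I ξ
  rw [habs, Complex.ofReal_one, one_mul] at h3
  exact h3

/-- key geometric fact: membership in an arc. -/
lemma mem_carc (x c ℓ : ℝ) (h0 : 0 ≤ ℓ) (h1 : ℓ < 1) (hx : |x - c| ≤ ℓ / 2) :
    pc x ∈ carc (pc c) ℓ := by
  rw [carc, if_neg (not_le.mpr h1)]
  set m : ℤ := ⌈c - 1/2⌉ with hm
  have hmle : (m:ℝ) < c + 1/2 := by
    have := Int.ceil_lt_add_one (c - 1/2)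
    push_cast at this ⊢
    linarith
  have hmge : c - 1/2 ≤ (m:ℝ) := Int.le_ceil _
  have harg : (pc c).arg = 2 * Real.pi * (c - m) := by
    have hper : pc c = pc (c - m) := by
      rw [show c - (m:ℝ) = c + (-m : ℤ) by push_cast; ring, pc_int_add]
    rw [hper, pc]
    have hrw : 2 * (Real.pi:ℂ) * Complex.I * (((c - (m:ℝ)) : ℝ) : ℂ)
        = ((2 * Real.pi * (c - m) : ℝ) : ℂ) * Complex.I := by push_cast; ring
    rw [hrw, Complex.exp_mul_I]
    have hmem : 2 * Real.pi * (c - m) ∈ Set.Ioc (-Real.pi) Real.pi := by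
      constructor
      · nlinarith [Real.pi_pos]
      · nlinarith [Real.pi_pos]
    exact_mod_cast Complex.arg_cos_add_sin_mul_I hmem
  have hc' : (pc c).arg / (2 * Real.pi) = c - m := by
    rw [harg]
    field_simp
  rw [hc']
  refine ⟨x - m, ?_, ?_⟩
  · constructor
    · have := abs_le.mp hx; linarith [this.1]
    · have := abs_le.mp hx; linarith [this.2]
  · rw [show x - (m:ℝ) = x + (-m : ℤ) by push_cast; ring, pc_int_add]

/-! ### the iterates of z ^ 2 -/

lemma sq_iter (ξ : ℂ) (n : ℕ) : (fun z : ℂ => z ^ 2)^[n] ξ = ξ ^ (2 ^ n) := by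
  induction n with
  | zero => simp
  | succ n ih =>
      rw [Function.iterate_succ_apply', ih, ← pow_mul, pow_succ]

/-! ### fract lemmas -/

lemma fract_pow_mul (X : ℝ) (j : ℕ) (h : (2:ℝ) ^ j * Int.fract X < 1) :
    Int.fract ((2:ℝ) ^ j * X) = 2 ^ j * Int.fract X := by
  have h2 : (2:ℝ) ^ j * X = ((2 ^ j * ⌊X⌋ : ℤ) : ℝ) + 2 ^ j * Int.fract X := by
    push_cast
    linear_combination (2:ℝ) ^ j * (Int.floor_add_fract X).symm
  rw [h2, Int.fract_intCast_add,
    Int.fract_eq_self.mpr ⟨mul_nonneg (by positivity) (Int.fract_nonneg X), h⟩]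

/-- if an aligned block of binary digits of `t` vanishes then a fractional part is small. -/
lemma fract_small_of_block_zero (t : ℝ) (ht : t ∈ Set.Ico (0:ℝ) 1) (N M r : ℕ)
    (hMr : M + r ≤ N)
    (hblock : (⌊(2:ℝ) ^ N * t⌋.toNat / 2 ^ (N - M - r)) % 2 ^ r = 0) :
    Int.fract ((2:ℝ) ^ M * t) < (1/2 : ℝ) ^ r := by
  set j : ℕ := ⌊(2:ℝ) ^ N * t⌋.toNat with hj
  have h0 : (0:ℝ) ≤ 2 ^ N * t := by
    have := ht.1; positivity
  have hjZ : (j:ℤ) = ⌊(2:ℝ) ^ N * t⌋ := Int.toNat_of_nonneg (Int.floor_nonneg.mpr h0)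
  set θ : ℝ := Int.fract ((2:ℝ) ^ N * t) with hθ
  have hNt : (2:ℝ) ^ N * t = j + θ := by
    have hc : ((j:ℤ):ℝ) = ((⌊(2:ℝ) ^ N * t⌋ : ℤ) : ℝ) := by exact_mod_cast hjZ
    push_cast at hc
    rw [hθ, Int.fract, hc]
    ring
  set D : ℕ := N - M with hD
  have hDr : r ≤ D := by omega
  have hMD : M + D = N := by omega
  set lo : ℕ := j % 2 ^ D with hlo
  set hi : ℕ := j / 2 ^ D with hhi
  have hjsplit : j = hi * 2 ^ D + lo := by
    rw [hhi, hlo, mul_comm]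
    exact (Nat.div_add_mod j (2 ^ D)).symm
  -- 2^M t = hi + (lo + θ)/2^D
  have hMt : (2:ℝ) ^ M * t = (hi:ℝ) + ((lo:ℝ) + θ) / 2 ^ D := by
    have h2D : (0:ℝ) < (2:ℝ) ^ D := by positivity
    have hND : (2:ℝ) ^ N = 2 ^ M * 2 ^ D := by rw [← pow_add, hMD]
    have : (2:ℝ) ^ M * t = (2 ^ N * t) / 2 ^ D := by
      rw [hND]; field_simp
    rw [this, hNt, hjsplit]
    push_cast
    field_simp
    ring
  have hlolt : lo < 2 ^ (D - r) := by
    have h1 : lo / 2 ^ (D - r) = (j / 2 ^ (N - M - r)) % 2 ^ r := by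
      have : N - M - r = D - r := by omega
      rw [this, hlo]
      have h2 : (2:ℕ) ^ D = 2 ^ (D - r) * 2 ^ r := by rw [← pow_add]; congr 1; omega
      rw [h2]
      exact Nat.mod_mul_right_div_self j _ _
    have := hblock
    rw [← h1] at this
    exact (Nat.div_eq_zero_iff.mp this).resolve_left (by positivity)
  have hfr : Int.fract ((2:ℝ) ^ M * t) = ((lo:ℝ) + θ) / 2 ^ D := by
    rw [hMt]
    have hθ0 : 0 ≤ θ := Int.fract_nonneg _
    have hθ1 : θ < 1 := Int.fract_lt_one _
    have hD0 : (0:ℝ) < 2 ^ D := by positivity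
    have hlt : ((lo:ℝ) + θ) / 2 ^ D < 1 := by
      rw [div_lt_one hD0]
      have hlo2 : lo + 1 ≤ 2 ^ D :=
        Nat.succ_le_of_lt (lt_of_lt_of_le hlolt (Nat.pow_le_pow_right (by norm_num) (by omega)))
      have hcast2 : (lo:ℝ) + 1 ≤ (2:ℝ) ^ D := by exact_mod_cast hlo2
      linarith
    rw [add_comm ((hi:ℝ)) _, Int.fract_add_natCast]
    exact Int.fract_eq_self.mpr ⟨by positivity, hlt⟩
  rw [hfr]
  have hD0 : (0:ℝ) < 2 ^ D := by positivity
  rw [div_lt_iff₀ hD0]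
  have hcast : (lo : ℝ) + 1 ≤ (2:ℝ) ^ (D - r) := by
    have h5 : lo + 1 ≤ 2 ^ (D - r) := hlolt
    exact_mod_cast h5
  have hθ1 : θ < 1 := Int.fract_lt_one _
  have hsplit : (1/2:ℝ) ^ r * 2 ^ D = 2 ^ (D - r) := by
    have h6 : (2:ℝ) ^ D = 2 ^ (D - r) * 2 ^ r := by rw [← pow_add]; congr 1; omega
    rw [div_pow, one_pow, h6]
    field_simp
  rw [hsplit]
  linarith
/-! ### counting -/

lemma count_blocks (B C : ℕ) (hB : 1 ≤ B) : ∀ q : ℕ,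
    ((Finset.range (B ^ q * C)).filter (fun j => ∀ i < q, j / B ^ i % B ≠ 0)).card
      ≤ (B - 1) ^ q * C := by
  intro q
  induction q with
  | zero =>
      simpa using le_trans (Finset.card_filter_le _ _) (by simp)
  | succ q ih =>
      set S : Finset ℕ :=
        (Finset.range (B ^ q * C)).filter (fun j => ∀ i < q, j / B ^ i % B ≠ 0) with hS
      set T : Finset ℕ := (Finset.range B).erase 0 with hT
      have hmaps : ∀ j ∈ (Finset.range (B ^ (q+1) * C)).filter
          (fun j => ∀ i < q + 1, j / B ^ i % B ≠ 0), (j / B, j % B) ∈ S ×ˢ T := by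
        intro j hj
        rw [Finset.mem_filter, Finset.mem_range] at hj
        obtain ⟨hjlt, hjc⟩ := hj
        rw [Finset.mem_product]
        constructor
        · rw [hS, Finset.mem_filter, Finset.mem_range]
          constructor
          · rw [Nat.div_lt_iff_lt_mul (by omega : 0 < B)]
            calc j < B ^ (q+1) * C := hjlt
              _ = B ^ q * C * B := by ring
          · intro i hi
            have h1 : j / B / B ^ i = j / B ^ (i+1) := by
              rw [Nat.div_div_eq_div_mul, ← pow_succ']
            rw [h1]
            exact hjc (i+1) (by omega)
        · rw [hT, Finset.mem_erase, Finset.mem_range]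
          refine ⟨?_, Nat.mod_lt _ (by omega)⟩
          have h0 := hjc 0 (by omega)
          simpa using h0
      have hinj : Set.InjOn (fun j => (j / B, j % B))
          ((Finset.range (B ^ (q+1) * C)).filter
            (fun j => ∀ i < q + 1, j / B ^ i % B ≠ 0) : Finset ℕ) := by
        intro x hx y hy hxy
        have h1 : x / B = y / B := congrArg Prod.fst hxy
        have h2 : x % B = y % B := congrArg Prod.snd hxy
        have h3 : B * (x / B) + x % B = B * (y / B) + y % B := by rw [h1, h2]
        rwa [Nat.div_add_mod, Nat.div_add_mod] at h3
      calc ((Finset.range (B ^ (q+1) * C)).filter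
              (fun j => ∀ i < q + 1, j / B ^ i % B ≠ 0)).card
          ≤ (S ×ˢ T).card := Finset.card_le_card_of_injOn _ hmaps hinj
        _ = S.card * T.card := Finset.card_product S T
        _ ≤ ((B - 1) ^ q * C) * (B - 1) := by
            apply Nat.mul_le_mul ih
            rw [hT, Finset.card_erase_of_mem (by rw [Finset.mem_range]; omega),
              Finset.card_range]
        _ = (B - 1) ^ (q+1) * C := by ring

/-! ### the lower bound on window sums -/

lemma one_le_sqrt_two : (1:ℝ) ≤ Real.sqrt 2 := by
  nlinarith [Real.sq_sqrt (show (0:ℝ) ≤ 2 by norm_num), Real.sqrt_nonneg 2]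

lemma cos_ge_half (x : ℝ) (h0 : 0 ≤ x) (h1 : x ≤ 1/8) :
    (1/2:ℝ) ≤ Real.cos (2 * Real.pi * x) := by
  have hpi4 : Real.pi ≤ 4 := Real.pi_le_four
  have hpip : 0 < Real.pi := Real.pi_pos
  have h2 : 2 * Real.pi * x ≤ Real.pi / 4 := by nlinarith
  have h3 : Real.cos (Real.pi/4) ≤ Real.cos (2 * Real.pi * x) :=
    Real.cos_le_cos_of_nonneg_of_le_pi (by positivity) (by nlinarith) h2
  rw [Real.cos_pi_div_four] at h3
  have := one_le_sqrt_two
  linarith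

lemma window_re (t : ℝ) (k M : ℕ)
    (hblk : ∀ n, M ≤ n → n ≤ M + 4*(k+1) → (Pf φ k ≤ n ∧ n < Pf φ (k+1)))
    (hy : Int.fract ((2:ℝ)^M * t) < (1/2)^(rk k - 1)) :
    (2:ℝ) ≤ (∑ n ∈ Finset.Ioc (M-1) (M + 4*(k+1)), aseq φ n * ((pc t) ^ (2^n))).re := by
  have hM1 : 1 ≤ M := le_trans (Pf_pos φ k) (hblk M le_rfl (by omega)).1
  set y : ℝ := Int.fract ((2:ℝ)^M * t) with hyy
  have hy0 : 0 ≤ y := Int.fract_nonneg _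
  have hterm : ∀ n ∈ Finset.Ioc (M-1) (M + 4*(k+1)),
      (1/((k:ℝ)+1)) * (1/2) ≤ (aseq φ n * ((pc t) ^ (2^n))).re := by
    intro n hn
    rw [Finset.mem_Ioc] at hn
    have hnM : M ≤ n := by omega
    have hnh : n ≤ M + 4*(k+1) := hn.2
    obtain ⟨hb1, hb2⟩ := hblk n hnM hnh
    have haeq : aseq φ n = ((1 / ((k:ℝ) + 1) : ℝ) : ℂ) := by
      rw [aseq_eq φ k n hb1 hb2]
    set j : ℕ := n - M with hjj
    have hjh : j ≤ 4*(k+1) := by omega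
    have hsm : (2:ℝ)^j * y ≤ 1/8 := by
      have h1 : (2:ℝ)^j * y ≤ 2^j * (1/2)^(rk k - 1) :=
        mul_le_mul_of_nonneg_left hy.le (by positivity)
      have h2 : (2:ℝ)^j * (1/2)^(rk k - 1) ≤ 1/8 := by
        have e1 : rk k - 1 = j + (rk k - 1 - j) := by rw [rk]; omega
        rw [e1, pow_add, ← mul_assoc, ← mul_pow,
          show (2:ℝ)*(1/2) = 1 by norm_num, one_pow, one_mul]
        calc ((1:ℝ)/2) ^ (rk k - 1 - j) ≤ ((1:ℝ)/2) ^ 3 :=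
              pow_le_pow_of_le_one (by norm_num) (by norm_num) (by rw [rk]; omega)
          _ ≤ 1/8 := by norm_num
      linarith
    have hsm1 : (2:ℝ)^j * y < 1 := lt_of_le_of_lt hsm (by norm_num)
    -- rewrite the power of pc
    have hpow : (pc t) ^ (2^n) = pc ((2:ℝ)^j * y) := by
      rw [pc_pow]
      have e2 : ((2^n : ℕ) : ℝ) * t = (2:ℝ)^j * ((2:ℝ)^M * t) := by
        push_cast
        have hn : n = j + M := by omega
        rw [hn, pow_add, mul_assoc]
      rw [e2, ← pc_fract ((2:ℝ)^j * ((2:ℝ)^M * t)), fract_pow_mul _ _ (by rwa [← hyy])]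
    rw [haeq, hpow, Complex.re_ofReal_mul, pc_re]
    apply mul_le_mul_of_nonneg_left _ (by positivity)
    exact cos_ge_half _ (mul_nonneg (by positivity) hy0) hsm
  have hcard : (Finset.Ioc (M-1) (M + 4*(k+1))).card = 4*(k+1) + 1 := by
    rw [Nat.card_Ioc]; omega
  have hsum := Finset.card_nsmul_le_sum _ _ _ hterm
  rw [hcard] at hsum
  rw [Complex.re_sum]
  have hfin : (2:ℝ) ≤ (4*(k+1) + 1 : ℕ) • ((1/((k:ℝ)+1)) * (1/2)) := by
    rw [nsmul_eq_mul]
    have hk : (0:ℝ) < (k:ℝ) + 1 := by positivity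
    push_cast
    rw [div_mul_div_comm, one_mul, mul_one_div, le_div_iff₀ (by positivity)]
    nlinarith
  calc (2:ℝ) ≤ _ := hfin
    _ ≤ _ := hsum

/-! ### divergence: Cauchy implies no zero runs -/

lemma fract_big (t : ℝ) (w : ℂ)
    (hconv : Tendsto (fun L => ∑ n ∈ Finset.Icc 1 L, aseq φ n * ((pc t) ^ (2^n)))
      atTop (𝓝 w)) :
    ∃ K₀ : ℕ, ∀ k, K₀ + 1 ≤ Pf φ k → ∀ i, i < qf φ k (Pf φ k) →
      ¬ (Int.fract ((2:ℝ)^(Pf φ k + i * rk k) * t) < (1/2)^(rk k - 1)) := by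
  set S := fun L => ∑ n ∈ Finset.Icc 1 L, aseq φ n * ((pc t) ^ (2^n)) with hSS
  have hcs : CauchySeq S := hconv.cauchySeq
  obtain ⟨K₀, hK₀⟩ := Metric.cauchySeq_iff.mp hcs 1 one_pos
  refine ⟨K₀, fun k hk i hi hfr => ?_⟩
  set M : ℕ := Pf φ k + i * rk k with hM
  have hM1 : Pf φ k ≤ M := by omega
  have hMK : K₀ ≤ M - 1 := by
    have := Pf_pos φ k
    omega
  have hblk : ∀ n, M ≤ n → n ≤ M + 4*(k+1) → (Pf φ k ≤ n ∧ n < Pf φ (k+1)) := by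
    intro n h1 h2
    constructor
    · omega
    · rw [Pf_succ]
      have h3 : i * rk k + 4*(k+1) < qf φ k (Pf φ k) * rk k := by
        have h4 : i + 1 ≤ qf φ k (Pf φ k) := hi
        have h5 : (i+1) * rk k ≤ qf φ k (Pf φ k) * rk k := Nat.mul_le_mul_right _ h4
        have h6 : 4*(k+1) < rk k := by rw [rk]; omega
        calc i * rk k + 4*(k+1) < i * rk k + rk k := by omega
          _ = (i+1) * rk k := by ring
          _ ≤ _ := h5
      omega
  have hre := window_re φ t k M hblk hfr
  have hdist := hK₀ (M + 4*(k+1)) (by omega) (M-1) (by omega)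
  rw [dist_eq_norm] at hdist
  have hsplit : S (M + 4*(k+1)) - S (M-1)
      = ∑ n ∈ Finset.Ioc (M-1) (M + 4*(k+1)), aseq φ n * ((pc t) ^ (2^n)) := by
    rw [hSS]
    simp only
    rw [show Finset.Icc 1 (M + 4*(k+1)) = Finset.Ioc 0 (M + 4*(k+1)) from Finset.Icc_add_one_left_eq_Ioc _ _,
      show Finset.Icc 1 (M-1) = Finset.Ioc 0 (M-1) from Finset.Icc_add_one_left_eq_Ioc _ _]
    rw [← Finset.sum_Ioc_consecutive _ (Nat.zero_le (M-1)) (by omega : M - 1 ≤ M + 4*(k+1))]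
    ring
  have hle : (2:ℝ) ≤ ‖S (M + 4*(k+1)) - S (M-1)‖ := by
    rw [hsplit]
    calc (2:ℝ) ≤ _ := hre
      _ ≤ ‖_‖ := Complex.re_le_norm _
  linarith
/-! ### behaviour of the coefficient sequence -/

lemma aseq_norm (n : ℕ) : ‖aseq φ n‖ = 1/((Kf φ n : ℝ)+1) := by
  rw [aseq, Complex.norm_real, Real.norm_eq_abs]
  exact abs_of_pos (by positivity)

lemma aseq_tendsto : Tendsto (aseq φ) atTop (𝓝 0) := by
  have hK : Tendsto (Kf φ) atTop atTop := by
    rw [tendsto_atTop_atTop]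
    exact fun b => ⟨Pf φ b, fun n hn => Kf_ge φ b n hn⟩
  have h1 : Tendsto (fun n => (1 / ((Kf φ n : ℝ) + 1) : ℝ)) atTop (𝓝 0) :=
    tendsto_one_div_add_atTop_nhds_zero_nat.comp hK
  have h2 : Tendsto (fun n => ((1 / ((Kf φ n : ℝ) + 1) : ℝ) : ℂ)) atTop (𝓝 ((0:ℝ):ℂ)) :=
    (Complex.continuous_ofReal.tendsto _).comp h1
  have h3 : aseq φ = fun n => ((1 / ((Kf φ n : ℝ) + 1) : ℝ) : ℂ) := rfl
  rw [h3]
  simpa using h2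

lemma aseq_not_summable : ¬ Summable (fun n => ‖aseq φ n‖) := by
  intro hsum
  rw [summable_iff_vanishing] at hsum
  obtain ⟨s, hball⟩ := hsum (Set.Iio (4:ℝ)) (Iio_mem_nhds (by norm_num))
  set k := s.sup id with hk
  set T := Finset.Ico (Pf φ k) (Pf φ (k+1)) with hT
  have hdisj : Disjoint T s := by
    rw [Finset.disjoint_left]
    intro x hx hxs
    rw [hT, Finset.mem_Ico] at hx
    have h1 : x ≤ k := le_trans (Finset.le_sup (f := id) hxs) le_rfl
    have h2 := Pf_lower φ k
    omega
  have := hball T hdisj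
  rw [Set.mem_Iio] at this
  have hsum2 : ∑ n ∈ T, ‖aseq φ n‖ = (T.card : ℝ) * (1/((k:ℝ)+1)) := by
    rw [Finset.sum_congr rfl (fun n hn => ?_), Finset.sum_const, nsmul_eq_mul]
    rw [hT, Finset.mem_Ico] at hn
    rw [aseq_norm, Kf_eq φ k n hn.1 hn.2]
  have hcard : T.card = qf φ k (Pf φ k) * rk k := by
    rw [hT, Nat.card_Ico, Pf_succ]
    omega
  have hq : 1 ≤ qf φ k (Pf φ k) := (qf_spec φ k (Pf φ k)).1
  have hcard2 : 8*(k+1) ≤ T.card := by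
    rw [hcard, rk]
    calc 8*(k+1) = 1 * (8*(k+1)) := (one_mul _).symm
      _ ≤ qf φ k (Pf φ k) * (8*(k+1)) := Nat.mul_le_mul_right _ hq
  have hge : (4:ℝ) ≤ ∑ n ∈ T, ‖aseq φ n‖ := by
    rw [hsum2]
    have hc : (8*((k:ℝ)+1)) ≤ (T.card : ℝ) := by exact_mod_cast hcard2
    have hkpos : (0:ℝ) < (k:ℝ)+1 := by positivity
    rw [mul_one_div, le_div_iff₀ hkpos]
    nlinarith
  linarith

/-! ### the admissible sets -/

/-- admissible dyadic indices at stage `k`. -/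
def Ak (k : ℕ) : Finset ℕ :=
  (Finset.range (2^(Pf φ (k+1)))).filter
    (fun j => ∀ i < qf φ k (Pf φ k), j / (2^(rk k))^i % (2^(rk k)) ≠ 0)

lemma Ak_card (k : ℕ) :
    (Ak φ k).card ≤ (2^(rk k) - 1)^(qf φ k (Pf φ k)) * 2^(Pf φ k) := by
  have h1 : (2:ℕ)^(Pf φ (k+1)) = (2^(rk k))^(qf φ k (Pf φ k)) * 2^(Pf φ k) := by
    rw [Pf_succ, pow_add, pow_mul']
    ring
  rw [Ak, h1]
  exact count_blocks (2^(rk k)) (2^(Pf φ k)) Nat.one_le_two_pow (qf φ k (Pf φ k))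

lemma card_phi_bound
    (hs : ∀ s : ℝ, 0 < s → s < 1 →
      Tendsto (fun t => φ t / t ^ s) (nhdsWithin 0 (Set.Ioi 0)) (𝓝 0)) (k : ℕ) :
    ((Ak φ k).card : ℝ) * φ ((1/2)^(Pf φ (k+1))) ≤ (1/2)^k := by
  obtain ⟨hq1, hA, hB, hC⟩ := qf_spec φ k (Pf φ k)
  set q := qf φ k (Pf φ k)
  set len : ℝ := (1/2:ℝ)^(Pf φ (k+1)) with hlen
  have hlenpos : 0 < len := by positivity
  have hlen' : len = (1/2:ℝ)^(Pf φ k + q * rk k) := by rw [hlen, Pf_succ]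
  have hφlen : φ len ≤ len ^ (sk k) := t0_spec φ hs k len hlenpos (by rw [hlen']; exact hB)
  have hlens : (0:ℝ) ≤ len ^ (sk k) := (Real.rpow_pos_of_pos hlenpos _).le
  have hcard : ((Ak φ k).card : ℝ) ≤ (2:ℝ)^(Pf φ k) * ((2:ℝ)^(rk k) - 1)^q := by
    have h1 := Ak_card φ k
    have h2 : (((2^(rk k) - 1)^q * 2^(Pf φ k) : ℕ) : ℝ)
        = ((2:ℝ)^(rk k) - 1)^q * 2^(Pf φ k) := by
      have h3 : (1:ℕ) ≤ 2^(rk k) := Nat.one_le_two_pow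
      push_cast [Nat.cast_sub h3]
      ring
    calc ((Ak φ k).card : ℝ) ≤ (((2^(rk k) - 1)^q * 2^(Pf φ k) : ℕ) : ℝ) := by exact_mod_cast h1
      _ = ((2:ℝ)^(rk k) - 1)^q * 2^(Pf φ k) := h2
      _ = (2:ℝ)^(Pf φ k) * ((2:ℝ)^(rk k) - 1)^q := by ring
  calc ((Ak φ k).card : ℝ) * φ len
      ≤ ((Ak φ k).card : ℝ) * len ^ (sk k) := by
        apply mul_le_mul_of_nonneg_left hφlen (by positivity)
    _ ≤ ((2:ℝ)^(Pf φ k) * ((2:ℝ)^(rk k) - 1)^q) * len ^ (sk k) :=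
        mul_le_mul_of_nonneg_right hcard hlens
    _ ≤ (1/2)^k := by rw [hlen']; exact hA

/-- membership of the dyadic index of a point surviving the divergence test. -/
lemma mem_Ak (t : ℝ) (ht : t ∈ Set.Ico (0:ℝ) 1) (k : ℕ)
    (hfr : ∀ i, i < qf φ k (Pf φ k) →
      ¬ (Int.fract ((2:ℝ)^(Pf φ k + i * rk k) * t) < (1/2)^(rk k - 1))) :
    (⌊(2:ℝ)^(Pf φ (k+1)) * t⌋).toNat ∈ Ak φ k := by
  set N := Pf φ (k+1) with hN
  set q := qf φ k (Pf φ k) with hq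
  set jN := (⌊(2:ℝ)^N * t⌋).toNat with hjN
  have h0 : (0:ℝ) ≤ 2^N * t := by
    have := ht.1; positivity
  have hjlt : jN < 2^N := by
    have h1 : (2:ℝ)^N * t < 2^N := by
      have h2 : (0:ℝ) < 2^N := by positivity
      nlinarith [ht.2]
    have h3 : ⌊(2:ℝ)^N * t⌋ < ((2^N : ℕ) : ℤ) := by
      apply Int.floor_lt.mpr
      push_cast
      exact h1
    have h4 : 0 ≤ ⌊(2:ℝ)^N * t⌋ := Int.floor_nonneg.mpr h0
    omega
  rw [Ak, Finset.mem_filter, Finset.mem_range]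
  refine ⟨hjlt, fun i' hi' hz => ?_⟩
  set i := q - 1 - i' with hi
  have hiq : i < q := by omega
  have hkey : Int.fract ((2:ℝ)^(Pf φ k + i * rk k) * t) < (1/2)^(rk k) := by
    apply fract_small_of_block_zero t ht N _ (rk k)
    · rw [hN, Pf_succ]
      have : (i + 1) * rk k ≤ q * rk k := Nat.mul_le_mul_right _ (by omega)
      have h5 := rk_pos k
      nlinarith [this]
    · have he : N - (Pf φ k + i * rk k) - rk k = i' * rk k := by
        have hqd : qf φ k (Pf φ k) = i + i' + 1 := by omega
        rw [hN, Pf_succ, hqd, Nat.add_mul, Nat.add_mul, Nat.one_mul]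
        omega
      rw [he, pow_mul']
      exact hz
  have := hfr i hiq
  apply this
  calc Int.fract ((2:ℝ)^(Pf φ k + i * rk k) * t) < (1/2)^(rk k) := hkey
    _ ≤ (1/2)^(rk k - 1) := pow_le_pow_of_le_one (by norm_num) (by norm_num) (by omega)
end OC

/-- Theorem 3: optimality. -/
theorem optimality (φ : ℝ → ℝ) (hφ : IsMeasureFunction φ)
    (hs : ∀ s : ℝ, 0 < s → s < 1 →
      Tendsto (fun t => φ t / t ^ s) (nhdsWithin 0 (Set.Ioi 0)) (𝓝 0)) :
    ∃ f : ℂ → ℂ, IsFBPN f ∧ f 0 = 0 ∧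
      ∃ a : ℕ → ℂ, Tendsto a atTop (𝓝 0) ∧ ¬ Summable (fun n => ‖a n‖) ∧
        ∀ w : ℂ, Hmeas φ (Aset f a w) = 0 := by
  classical
  refine ⟨fun z => z^2, ⟨1, 2, 0, Fin.elim0, by norm_num, by norm_num, by norm_num,
      fun j => j.elim0, fun w => by simp⟩, by norm_num, OC.aseq φ,
    OC.aseq_tendsto φ, OC.aseq_not_summable φ, fun w => ?_⟩
  unfold Hmeas
  apply le_antisymm _ zero_le
  refine iSup_le fun δ => iSup_le fun hδ => ?_
  refine ENNReal.le_of_forall_pos_le_add fun ε hε _ => ?_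
  rw [zero_add]
  -- choose the offset M₀
  obtain ⟨M₀, hM₀⟩ := exists_pow_lt_of_lt_one
    (show (0:ℝ) < min δ ((ε:ℝ)/2) from lt_min hδ (by positivity)) (show (1/2:ℝ) < 1 by norm_num)
  have hM₀δ : (1/2:ℝ)^M₀ < δ := lt_of_lt_of_le hM₀ (min_le_left _ _)
  have hM₀ε : (1/2:ℝ)^M₀ ≤ (ε:ℝ)/2 := le_of_lt (lt_of_lt_of_le hM₀ (min_le_right _ _))
  -- the cover
  set ξf : ℕ → ℂ := fun n =>
    pc ((((Nat.unpair n).2 : ℝ) + 1/2) * (1/2)^(OC.Pf φ ((Nat.unpair n).1 + M₀ + 1))) with hξf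
  set ℓf : ℕ → ℝ := fun n =>
    if (Nat.unpair n).2 ∈ OC.Ak φ ((Nat.unpair n).1 + M₀)
    then (1/2:ℝ)^(OC.Pf φ ((Nat.unpair n).1 + M₀ + 1)) else 0 with hℓf
  have hlen1 : ∀ k : ℕ, M₀ ≤ k → (1/2:ℝ)^(OC.Pf φ (k + 1)) < δ := by
    intro k hk
    have h1 : M₀ ≤ OC.Pf φ (k+1) := le_trans (by omega) (OC.Pf_lower φ (k+1))
    calc (1/2:ℝ)^(OC.Pf φ (k+1)) ≤ (1/2)^M₀ :=
          pow_le_pow_of_le_one (by norm_num) (by norm_num) h1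
      _ < δ := hM₀δ
  have hbounds : ∀ n, 0 ≤ ℓf n ∧ ℓf n < δ := by
    intro n
    rw [hℓf]
    simp only
    split
    · exact ⟨by positivity, hlen1 _ (by omega)⟩
    · exact ⟨le_rfl, hδ⟩
  have hcover : Aset (fun z => z^2) (OC.aseq φ) w ⊆ ⋃ n, carc (ξf n) (ℓf n) := by
    rintro ξ ⟨huc, htd⟩
    set t := Int.fract (ξ.arg / (2*Real.pi)) with htt
    have hpct : pc t = ξ := OC.uc_eq_pc ξ huc
    have ht : t ∈ Set.Ico (0:ℝ) 1 := ⟨Int.fract_nonneg _, Int.fract_lt_one _⟩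
    have htd' : Tendsto (fun L => ∑ n ∈ Finset.Icc 1 L, OC.aseq φ n * ((pc t) ^ (2^n)))
        atTop (𝓝 w) := by
      have heq : (fun L => ∑ n ∈ Finset.Icc 1 L, OC.aseq φ n * ((pc t) ^ (2^n)))
          = (fun L => ∑ n ∈ Finset.Icc 1 L, OC.aseq φ n * ((fun z : ℂ => z^2)^[n] ξ)) := by
        funext L
        apply Finset.sum_congr rfl
        intro n _
        rw [OC.sq_iter, hpct]
      rw [heq]
      exact htd
    obtain ⟨K₀, hK₀⟩ := OC.fract_big φ t w htd'
    set k := K₀ + M₀ with hkk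
    have hPk : K₀ + 1 ≤ OC.Pf φ k := le_trans (by omega) (OC.Pf_lower φ k)
    have hmem := OC.mem_Ak φ t ht k (fun i hi => hK₀ k hPk i hi)
    set N := OC.Pf φ (k+1) with hN
    set jN := (⌊(2:ℝ)^N * t⌋).toNat with hjN
    refine Set.mem_iUnion.mpr ⟨Nat.pair K₀ jN, ?_⟩
    have hup : Nat.unpair (Nat.pair K₀ jN) = (K₀, jN) := Nat.unpair_pair _ _
    have hℓval : ℓf (Nat.pair K₀ jN) = (1/2:ℝ)^N := by
      rw [hℓf]
      simp only [hup]
      rw [if_pos hmem]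
    have hξval : ξf (Nat.pair K₀ jN) = pc (((jN:ℝ) + 1/2) * (1/2)^N) := by
      rw [hξf]
      simp only [hup]
      rfl
    rw [hℓval, hξval, ← hpct]
    -- floor bounds
    have h2N : (0:ℝ) < 2^N := by positivity
    have h0 : (0:ℝ) ≤ 2^N * t := by have := ht.1; positivity
    have hjZ : ((jN:ℤ):ℝ) = ((⌊(2:ℝ)^N * t⌋ : ℤ) : ℝ) := by
      have h9 := Int.toNat_of_nonneg (Int.floor_nonneg.mpr h0)
      rw [hjN]
      exact_mod_cast congrArg (fun z : ℤ => (z:ℝ)) h9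
    have h1 : (jN:ℝ) ≤ 2^N * t := by
      rw [show ((jN:ℕ):ℝ) = ((jN:ℤ):ℝ) by push_cast; ring, hjZ]
      exact Int.floor_le _
    have h2 : 2^N * t < (jN:ℝ) + 1 := by
      rw [show ((jN:ℕ):ℝ) = ((jN:ℤ):ℝ) by push_cast; ring, hjZ]
      exact Int.lt_floor_add_one _
    have hprod : (1/2:ℝ)^N * 2^N = 1 := by
      rw [← mul_pow]; norm_num
    have hu0 : (0:ℝ) ≤ (1/2:ℝ)^N := by positivity
    have ht2 : (2^N * t) * (1/2:ℝ)^N = t := by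
      rw [mul_comm ((2:ℝ)^N) t, mul_assoc, mul_comm ((1/2:ℝ)^N) ((2:ℝ)^N)] at *
      nlinarith [hprod]
    apply OC.mem_carc t (((jN:ℝ) + 1/2) * (1/2)^N) ((1/2:ℝ)^N) (by positivity)
    · apply pow_lt_one₀ (by norm_num) (by norm_num)
      have := OC.Pf_pos φ (k+1)
      omega
    · have hl : (jN:ℝ) * (1/2)^N ≤ t := by
        have := mul_le_mul_of_nonneg_right h1 hu0
        rwa [ht2] at this
      have hr : t ≤ ((jN:ℝ) + 1) * (1/2)^N := by
        have := mul_le_mul_of_nonneg_right h2.le hu0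
        rwa [ht2] at this
      rw [abs_le]
      constructor
      · nlinarith
      · nlinarith
  have hsum : ∑' n, ENNReal.ofReal (φ (ℓf n)) ≤ (ε : ℝ≥0∞) := by
    have hstep : ∀ K : ℕ,
        (∑' i : ℕ, ENNReal.ofReal (φ (if i ∈ OC.Ak φ (K + M₀)
          then (1/2:ℝ)^(OC.Pf φ (K + M₀ + 1)) else 0)))
        ≤ ENNReal.ofReal ((1/2)^(K+M₀)) := by
      intro K
      rw [tsum_eq_sum (s := OC.Ak φ (K + M₀))
        (fun i hi => by rw [if_neg hi, hφ.1, ENNReal.ofReal_zero])]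
      rw [Finset.sum_congr rfl (fun i hi => by rw [if_pos hi])]
      rw [Finset.sum_const, nsmul_eq_mul, ← ENNReal.ofReal_natCast,
        ← ENNReal.ofReal_mul (by positivity)]
      exact ENNReal.ofReal_le_ofReal (OC.card_phi_bound φ hs (K + M₀))
    have hsummable : Summable (fun K : ℕ => (1/2:ℝ)^(K+M₀)) := by
      have hfn : (fun K : ℕ => (1/2:ℝ)^(K+M₀)) = fun K => (1/2:ℝ)^M₀ * (1/2)^K := by
        funext K; rw [pow_add]; ring
      rw [hfn]
      exact (summable_geometric_of_lt_one (by norm_num) (by norm_num)).mul_left _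
    calc ∑' n, ENNReal.ofReal (φ (ℓf n))
        = ∑' (p : ℕ × ℕ), ENNReal.ofReal (φ (if p.2 ∈ OC.Ak φ (p.1 + M₀)
            then (1/2:ℝ)^(OC.Pf φ (p.1 + M₀ + 1)) else 0)) := by
          exact Nat.pairEquiv.symm.tsum_eq
            (fun p : ℕ × ℕ => ENNReal.ofReal (φ (if p.2 ∈ OC.Ak φ (p.1 + M₀)
              then (1/2:ℝ)^(OC.Pf φ (p.1 + M₀ + 1)) else 0)))
      _ = ∑' (K : ℕ) (i : ℕ), ENNReal.ofReal (φ (if i ∈ OC.Ak φ (K + M₀)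
            then (1/2:ℝ)^(OC.Pf φ (K + M₀ + 1)) else 0)) :=
          ENNReal.tsum_prod (f := fun K i => ENNReal.ofReal (φ (if i ∈ OC.Ak φ (K + M₀)
            then (1/2:ℝ)^(OC.Pf φ (K + M₀ + 1)) else 0)))
      _ ≤ ∑' (K : ℕ), ENNReal.ofReal ((1/2)^(K+M₀)) := ENNReal.tsum_le_tsum hstep
      _ = ENNReal.ofReal (∑' (K : ℕ), (1/2:ℝ)^(K+M₀)) :=
          (ENNReal.ofReal_tsum_of_nonneg (fun K => by positivity) hsummable).symm
      _ ≤ (ε : ℝ≥0∞) := by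
          have hval : (∑' (K : ℕ), (1/2:ℝ)^(K+M₀)) = (1/2)^M₀ * 2 := by
            have hfn : (fun K : ℕ => (1/2:ℝ)^(K+M₀)) = fun K => (1/2:ℝ)^M₀ * (1/2)^K := by
              funext K; rw [pow_add]; ring
            rw [hfn, tsum_mul_left, tsum_geometric_of_lt_one (by norm_num) (by norm_num)]
            norm_num
          rw [hval]
          calc ENNReal.ofReal ((1/2:ℝ)^M₀ * 2) ≤ ENNReal.ofReal (ε:ℝ) :=
                ENNReal.ofReal_le_ofReal (by linarith)
            _ = (ε:ℝ≥0∞) := ENNReal.ofReal_coe_nnreal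
  calc (⨅ (ξ : ℕ → ℂ) (ℓ : ℕ → ℝ) (_ : ∀ n, 0 ≤ ℓ n ∧ ℓ n < δ)
        (_ : Aset (fun z => z^2) (OC.aseq φ) w ⊆ ⋃ n, carc (ξ n) (ℓ n)),
        ∑' n, ENNReal.ofReal (φ (ℓ n)))
      ≤ ∑' n, ENNReal.ofReal (φ (ℓf n)) :=
        iInf_le_of_le ξf (iInf_le_of_le ℓf (iInf_le_of_le hbounds (iInf_le_of_le hcover le_rfl)))
    _ ≤ (ε : ℝ≥0∞) := hsum

end
end

section
/- Let f be a finite Blaschke product with f(0) = 0 which is not a rotation. Then min{|f'(ξ)| : ξ ∈ ∂𝔻} > 1; consequently the induced boundary map f : ∂𝔻 → ∂𝔻 is expanding, i.e. m(f(I)) > m(I) for every proper subarc I of ∂𝔻. -/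
open MeasureTheory Filter
open scoped Classical ENNReal Topology

noncomputable section

lemma pc_norm (t : ℝ) : ‖pc t‖ = 1 := by
  have : pc t = Complex.exp (((2 * Real.pi * t : ℝ) : ℂ) * Complex.I) := by
    rw [pc]; push_cast; ring_nf
  rw [this, Complex.norm_exp_ofReal_mul_I]

lemma pc_add_int (t : ℝ) (k : ℤ) : pc (t + k) = pc t := by
  rw [pc, pc]
  have : (2 * (Real.pi:ℂ) * Complex.I * ((t:ℂ) + (k:ℂ))) =
      2 * (Real.pi:ℂ) * Complex.I * t + (k:ℂ) * (2 * Real.pi * Complex.I) := by ring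
  push_cast
  rw [this, Complex.exp_add, Complex.exp_int_mul_two_pi_mul_I]
  ring

lemma pc_eq_iff {s t : ℝ} : pc s = pc t ↔ ∃ k : ℤ, s = t + k := by
  rw [pc, pc, Complex.exp_eq_exp_iff_exists_int]
  constructor
  · rintro ⟨n, hn⟩
    refine ⟨n, ?_⟩
    have h2 : (2 * (Real.pi:ℂ) * Complex.I) ≠ 0 := by
      simp [Complex.I_ne_zero, Real.pi_ne_zero, Complex.ofReal_ne_zero]
    have : (s:ℂ) = (t:ℂ) + (n:ℂ) := by
      have := hn
      have h3 : 2 * (Real.pi:ℂ) * Complex.I * s = 2 * (Real.pi:ℂ) * Complex.I * (t + n) := by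
        rw [this]; ring
      exact mul_left_cancel₀ h2 h3
    exact_mod_cast this
  · rintro ⟨k, rfl⟩
    exact ⟨k, by push_cast; ring⟩

lemma pc_mul (s t : ℝ) : pc s * pc t = pc (s + t) := by
  rw [pc, pc, pc, ← Complex.exp_add]; push_cast; ring_nf

lemma continuous_pc : Continuous pc := by
  unfold pc; fun_prop

lemma pc_arg {z : ℂ} (hz : ‖z‖ = 1) : pc (z.arg / (2 * Real.pi)) = z := by
  have hpi : (Real.pi : ℂ) ≠ 0 := by exact_mod_cast Real.pi_ne_zero
  have : (2 * (Real.pi:ℂ) * Complex.I * ((z.arg / (2 * Real.pi) : ℝ) : ℂ)) = z.arg * Complex.I := by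
    push_cast; field_simp
  rw [pc, this]
  have := Complex.norm_mul_exp_arg_mul_I z
  rw [hz] at this; simpa using this

lemma uc_measurable : MeasurableSet uc := by
  have : uc = (fun z : ℂ => ‖z‖) ⁻¹' {1} := rfl
  exact this ▸ (measurable_norm (measurableSet_singleton 1))

lemma μc_apply {S : Set ℂ} (hS : MeasurableSet S) :
    μc S = volume (pc ⁻¹' S ∩ Set.Ico (0:ℝ) 1) := by
  rw [μc, Measure.map_apply continuous_pc.measurable hS,
    Measure.restrict_apply' measurableSet_Ico]

lemma μc_uc : μc uc = 1 := by
  rw [μc_apply uc_measurable]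
  have : pc ⁻¹' uc = Set.univ := by
    ext t; simpa [uc] using pc_norm t
  rw [this, Set.univ_inter, Real.volume_Ico]
  norm_num

lemma pc_image_Icc_one (u : ℝ) : pc '' Set.Icc u (u + 1) = uc := by
  apply Set.Subset.antisymm
  · rintro z ⟨t, _, rfl⟩; exact pc_norm t
  · intro z hz
    set t₀ := z.arg / (2 * Real.pi)
    set k : ℤ := ⌈u - t₀⌉
    refine ⟨t₀ + k, ⟨?_, ?_⟩, by rw [pc_add_int, pc_arg hz]⟩
    · have := Int.le_ceil (u - t₀); linarith
    · have := Int.ceil_lt_add_one (u - t₀); linarith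

lemma pc_image_Icc_measurable (u v : ℝ) : MeasurableSet (pc '' Set.Icc u v) :=
  (isCompact_Icc.image continuous_pc).measurableSet

lemma μc_arc_core {u v : ℝ} (hu0 : 0 ≤ u) (hu1 : u < 1) (huv : u ≤ v) (hv : v < u + 1) :
    μc (pc '' Set.Icc u v) = ENNReal.ofReal (v - u) := by
  rw [μc_apply (pc_image_Icc_measurable u v)]
  have hA : pc ⁻¹' (pc '' Set.Icc u v) ∩ Set.Ico (0:ℝ) 1 =
      (Set.Icc u v ∩ Set.Ico (0:ℝ) 1) ∪ (Set.Icc (u-1) (v-1) ∩ Set.Ico (0:ℝ) 1) := by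
    ext x
    constructor
    · rintro ⟨⟨t, ht, hpt⟩, hx01⟩
      obtain ⟨k, hk⟩ := pc_eq_iff.mp hpt.symm
      -- x = t + k
      have hk1 : (k:ℝ) < 1 := by
        have : (k:ℝ) = x - t := by linarith
        have := ht.1; have := hx01.2; linarith
      have hk2 : (-2:ℝ) < k := by
        have : (k:ℝ) = x - t := by linarith
        have := ht.2; have := hx01.1; linarith
      have hk1' : k < 1 := by exact_mod_cast hk1
      have hk2' : (-2:ℤ) < k := by exact_mod_cast hk2
      interval_cases k
      · right
        refine ⟨⟨?_, ?_⟩, hx01⟩ <;> push_cast at hk <;> [linarith [ht.1]; linarith [ht.2]]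
      · left
        refine ⟨⟨?_, ?_⟩, hx01⟩ <;> (push_cast at hk) <;> [linarith [ht.1]; linarith [ht.2]]
    · rintro (⟨hx, hx01⟩ | ⟨hx, hx01⟩)
      · exact ⟨⟨x, hx, rfl⟩, hx01⟩
      · refine ⟨⟨x + 1, ⟨by linarith [hx.1], by linarith [hx.2]⟩, ?_⟩, hx01⟩
        have := pc_add_int x 1; push_cast at this; rw [← this]
  rw [hA]
  by_cases hv1 : v < 1
  · have h1 : Set.Icc u v ∩ Set.Ico (0:ℝ) 1 = Set.Icc u v := by
      apply Set.inter_eq_left.mpr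
      intro x hx; exact ⟨by linarith [hx.1], by linarith [hx.2]⟩
    have h2 : Set.Icc (u-1) (v-1) ∩ Set.Ico (0:ℝ) 1 = ∅ := by
      ext x; simp only [Set.mem_inter_iff, Set.mem_Icc, Set.mem_Ico, Set.mem_empty_iff_false,
        iff_false, not_and]
      intro h1x h2x h3x; linarith
    rw [h1, h2, Set.union_empty, Real.volume_Icc]
  · push_neg at hv1
    have h1 : Set.Icc u v ∩ Set.Ico (0:ℝ) 1 = Set.Ico u 1 := by
      ext x; simp only [Set.mem_inter_iff, Set.mem_Icc, Set.mem_Ico]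
      constructor
      · rintro ⟨⟨a1, a2⟩, b1, b2⟩; exact ⟨a1, b2⟩
      · rintro ⟨a1, a2⟩; exact ⟨⟨a1, by linarith⟩, by linarith, a2⟩
    have h2 : Set.Icc (u-1) (v-1) ∩ Set.Ico (0:ℝ) 1 = Set.Icc 0 (v-1) := by
      ext x; simp only [Set.mem_inter_iff, Set.mem_Icc, Set.mem_Ico]
      constructor
      · rintro ⟨⟨a1, a2⟩, b1, b2⟩; exact ⟨b1, a2⟩
      · rintro ⟨a1, a2⟩; exact ⟨⟨by linarith, a2⟩, a1, by linarith⟩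
    rw [h1, h2]
    have hdisj : Disjoint (Set.Ico u 1) (Set.Icc (0:ℝ) (v-1)) := by
      rw [Set.disjoint_left]
      rintro x ⟨a1, a2⟩ ⟨b1, b2⟩; linarith
    rw [measure_union hdisj measurableSet_Icc, Real.volume_Ico, Real.volume_Icc,
      ← ENNReal.ofReal_add (by linarith) (by linarith)]
    congr 1; ring

lemma μc_arc {u v : ℝ} (huv : u ≤ v) (hv : v - u < 1) :
    μc (pc '' Set.Icc u v) = ENNReal.ofReal (v - u) := by
  set k : ℤ := ⌊u⌋
  have himg : pc '' Set.Icc u v = pc '' Set.Icc (u - k) (v - k) := by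
    ext z; simp only [Set.mem_image]
    constructor
    · rintro ⟨t, ht, rfl⟩
      refine ⟨t - k, ⟨by linarith [ht.1], by linarith [ht.2]⟩, ?_⟩
      have := pc_add_int (t - k) k; rw [← this]; ring_nf
    · rintro ⟨t, ht, rfl⟩
      refine ⟨t + k, ⟨by linarith [ht.1], by linarith [ht.2]⟩, (pc_add_int t k)⟩
  rw [himg]
  have := μc_arc_core (u := u - k) (v := v - k)
    (by have := Int.floor_le u; linarith) (by have := Int.lt_floor_add_one u; linarith)
    (by linarith) (by linarith)
  rw [this]; congr 1; ring

def bl (a w : ℂ) : ℂ := (w - a) / (1 - (starRingEnd ℂ) a * w)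

lemma uc_mul_conj {ξ : ℂ} (hξ : ‖ξ‖ = 1) : ξ * (starRingEnd ℂ) ξ = 1 := by
  rw [Complex.mul_conj]
  rw [Complex.normSq_eq_norm_sq, hξ]; norm_num

lemma denom_ne {a ξ : ℂ} (ha : ‖a‖ < 1) (hξ : ‖ξ‖ = 1) : 1 - (starRingEnd ℂ) a * ξ ≠ 0 := by
  intro h
  have h1 : (1:ℂ) = (starRingEnd ℂ) a * ξ := by linear_combination h
  have : ‖(starRingEnd ℂ) a * ξ‖ = ‖a‖ := by
    rw [norm_mul, hξ, RCLike.norm_conj, mul_one]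
  rw [← h1] at this
  simp at this; linarith

lemma sub_ne {a ξ : ℂ} (ha : ‖a‖ < 1) (hξ : ‖ξ‖ = 1) : ξ - a ≠ 0 := by
  intro h
  have : ξ = a := by linear_combination h
  rw [this] at hξ; linarith

lemma key_id {a ξ : ℂ} (hξ : ‖ξ‖ = 1) :
    1 - (starRingEnd ℂ) a * ξ = ξ * (starRingEnd ℂ) (ξ - a) := by
  have := uc_mul_conj hξ
  rw [map_sub]; linear_combination -this

lemma bl_norm {a ξ : ℂ} (ha : ‖a‖ < 1) (hξ : ‖ξ‖ = 1) : ‖bl a ξ‖ = 1 := by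
  rw [bl, norm_div, key_id hξ, norm_mul, hξ, one_mul, RCLike.norm_conj]
  rw [div_self]
  exact norm_ne_zero_iff.mpr (sub_ne ha hξ)

lemma normSq_cast (z : ℂ) : ((‖z‖ ^ 2 : ℝ) : ℂ) = z * (starRingEnd ℂ) z := by
  rw [Complex.mul_conj]
  norm_cast
  rw [Complex.normSq_eq_norm_sq]

lemma hasDerivAt_bl {a ξ : ℂ} (ha : ‖a‖ < 1) (hξ : ‖ξ‖ = 1) :
    HasDerivAt (bl a) (bl a ξ * (((1 - ‖a‖ ^ 2) / ‖ξ - a‖ ^ 2 : ℝ) : ℂ) / ξ) ξ := by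
  have hd := denom_ne ha hξ
  have hs := sub_ne ha hξ
  have hξ0 : ξ ≠ 0 := by intro h; rw [h] at hξ; simp at hξ
  have hnum : HasDerivAt (fun w : ℂ => w - a) 1 ξ := (hasDerivAt_id ξ).sub_const a
  have hden : HasDerivAt (fun w : ℂ => 1 - (starRingEnd ℂ) a * w) (-(starRingEnd ℂ) a) ξ := by
    simpa using ((hasDerivAt_id ξ).const_mul ((starRingEnd ℂ) a)).const_sub 1
  have h := hnum.div hden hd
  refine h.congr_deriv ?_; symm
  have e1 : ((1 - ‖a‖ ^ 2 : ℝ) : ℂ) = 1 - a * (starRingEnd ℂ) a := by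
    rw [Complex.ofReal_sub, normSq_cast]; norm_num
  have hc : (starRingEnd ℂ) (ξ - a) ≠ 0 := by rwa [ne_eq, map_eq_zero]
  have hkey := key_id (a := a) hξ
  have h2 : (1 - (starRingEnd ℂ) a * ξ) ^ 2
      = (1 - (starRingEnd ℂ) a * ξ) * (ξ * (starRingEnd ℂ) (ξ - a)) := by
    rw [hkey]; ring
  have e2 : 1 * (1 - (starRingEnd ℂ) a * ξ) - (ξ - a) * -(starRingEnd ℂ) a
      = 1 - a * (starRingEnd ℂ) a := by ring
  rw [bl, Complex.ofReal_div, e1, normSq_cast, e2, h2, div_mul_div_comm, div_div,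
    div_eq_div_iff
      (mul_ne_zero (mul_ne_zero hd (mul_ne_zero hs hc)) hξ0)
      (mul_ne_zero hd (mul_ne_zero hξ0 hc))]
  ring

def FF (α : ℂ) (m : ℕ) {J : ℕ} (zs : Fin J → ℂ) : ℂ → ℂ :=
  fun w => α * w ^ m * ∏ j, (w - zs j) / (1 - (starRingEnd ℂ) (zs j) * w)

def rr {J : ℕ} (zs : Fin J → ℂ) (ξ : ℂ) : ℝ := ∑ j, (1 - ‖zs j‖ ^ 2) / ‖ξ - zs j‖ ^ 2

lemma FF_norm {α : ℂ} {m J : ℕ} {zs : Fin J → ℂ} (hα : ‖α‖ = 1) (hz : ∀ j, ‖zs j‖ < 1)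
    {ξ : ℂ} (hξ : ‖ξ‖ = 1) : ‖FF α m zs ξ‖ = 1 := by
  rw [FF, norm_mul, norm_mul, norm_pow, norm_prod, hα, hξ]
  have : ∏ b : Fin J, ‖(ξ - zs b) / (1 - (starRingEnd ℂ) (zs b) * ξ)‖ = 1 :=
    Finset.prod_eq_one (fun j _ => bl_norm (hz j) hξ)
  rw [this]; norm_num

lemma hasDerivAt_FF {α : ℂ} {m J : ℕ} {zs : Fin J → ℂ} (hm : 1 ≤ m)
    (hz : ∀ j, ‖zs j‖ < 1) {ξ : ℂ} (hξ : ‖ξ‖ = 1) :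
    HasDerivAt (FF α m zs) (FF α m zs ξ * (((m : ℝ) + rr zs ξ : ℝ) : ℂ) / ξ) ξ := by
  have hξ0 : ξ ≠ 0 := by intro h; rw [h] at hξ; simp at hξ
  have hP : HasDerivAt (fun w => ∏ j, bl (zs j) w)
      (∑ j, (∏ k ∈ Finset.univ.erase j, bl (zs k) ξ) •
        (bl (zs j) ξ * (((1 - ‖zs j‖ ^ 2) / ‖ξ - zs j‖ ^ 2 : ℝ) : ℂ) / ξ)) ξ :=
    HasDerivAt.fun_finsetProd (fun j _ => hasDerivAt_bl (hz j) hξ)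
  have hsum : (∑ j, (∏ k ∈ Finset.univ.erase j, bl (zs k) ξ) •
        (bl (zs j) ξ * (((1 - ‖zs j‖ ^ 2) / ‖ξ - zs j‖ ^ 2 : ℝ) : ℂ) / ξ))
      = (∏ j, bl (zs j) ξ) * ((rr zs ξ : ℝ) : ℂ) / ξ := by
    have : ∀ j : Fin J, (∏ k ∈ Finset.univ.erase j, bl (zs k) ξ) •
        (bl (zs j) ξ * (((1 - ‖zs j‖ ^ 2) / ‖ξ - zs j‖ ^ 2 : ℝ) : ℂ) / ξ)
        = (∏ k, bl (zs k) ξ) * (((1 - ‖zs j‖ ^ 2) / ‖ξ - zs j‖ ^ 2 : ℝ) : ℂ) / ξ := by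
      intro j
      rw [smul_eq_mul, ← Finset.prod_erase_mul Finset.univ _ (Finset.mem_univ j)]
      ring
    rw [Finset.sum_congr rfl (fun j _ => this j)]
    rw [rr]
    push_cast
    rw [← Finset.sum_div, ← Finset.mul_sum]
  rw [hsum] at hP
  have hF := ((hasDerivAt_pow m ξ).fun_mul hP).const_mul α
  have hfun : (fun w => α * (w ^ m * ∏ j, bl (zs j) w)) = FF α m zs := by
    funext w; rw [FF]; unfold bl; ring
  rw [hfun] at hF
  refine hF.congr_deriv ?_; symm
  have hpow : ξ ^ m = ξ ^ (m - 1) * ξ := by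
    conv_lhs => rw [show m = (m - 1) + 1 by omega]
    rw [pow_succ]
  have hFFval : FF α m zs ξ = α * (ξ ^ m * ∏ j, bl (zs j) ξ) := by
    rw [← hfun]
  rw [hFFval, hpow]
  push_cast
  field_simp

def Sf (m : ℕ) {J : ℕ} (zs : Fin J → ℂ) (t : ℝ) : ℝ := (m : ℝ) + rr zs (pc t)

lemma continuous_Sf {m J : ℕ} {zs : Fin J → ℂ} (hz : ∀ j, ‖zs j‖ < 1) :
    Continuous (Sf m zs) := by
  unfold Sf rr
  apply continuous_const.add
  apply continuous_finset_sum
  intro j _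
  apply Continuous.div continuous_const
  · exact (Continuous.norm (continuous_pc.sub continuous_const)).pow 2
  · intro t
    have hne : pc t ≠ zs j := by
      intro h
      have h1 := pc_norm t
      rw [h] at h1
      exact absurd h1 (ne_of_lt (hz j))
    have : pc t - zs j ≠ 0 := sub_ne_zero.mpr hne
    exact pow_ne_zero 2 (norm_ne_zero_iff.mpr this)

lemma hasDerivAt_pc (t : ℝ) :
    HasDerivAt pc (2 * (Real.pi : ℂ) * Complex.I * pc t) t := by
  have h1 : HasDerivAt (fun s : ℝ => (s : ℂ)) 1 t := by
    simpa using (hasDerivAt_id t).ofReal_comp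
  have h2 := (h1.const_mul (2 * (Real.pi : ℂ) * Complex.I)).cexp
  have hpc : pc = fun s : ℝ => Complex.exp (2 * (Real.pi : ℂ) * Complex.I * (s : ℂ)) := by
    funext s; rw [pc]
  rw [hpc]
  convert h2 using 1
  ring

lemma lift_eq {α : ℂ} {m J : ℕ} {zs : Fin J → ℂ} (hm : 1 ≤ m)
    (hz : ∀ j, ‖zs j‖ < 1) (a t : ℝ) :
    FF α m zs (pc t) = FF α m zs (pc a) * pc (∫ s in a..t, Sf m zs s) := by
  set c : ℂ := 2 * (Real.pi : ℂ) * Complex.I with hc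
  set G : ℝ → ℝ := fun t => ∫ s in a..t, Sf m zs s with hGdef
  have hG : ∀ u, HasDerivAt G (Sf m zs u) u := fun u =>
    ((continuous_Sf hz).integral_hasStrictDerivAt a u).hasDerivAt
  have hh : ∀ u : ℝ, HasDerivAt (fun s => FF α m zs (pc s))
      (c * (Sf m zs u : ℂ) * FF α m zs (pc u)) u := by
    intro u
    have hξ0 : pc u ≠ 0 := by
      intro h; have := pc_norm u; rw [h] at this; simp at this
    have h2 := HasDerivAt.scomp u (hasDerivAt_FF (α := α) hm hz (pc_norm u)) (hasDerivAt_pc u)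
    refine h2.congr_deriv ?_; symm
    rw [smul_eq_mul]
    field_simp [Sf]
    rw [hc, Sf]; ring
  set Φ : ℝ → ℂ := fun s => FF α m zs (pc s) * Complex.exp (-(c * (G s : ℂ))) with hΦdef
  have hΦ : ∀ u, HasDerivAt Φ 0 u := by
    intro u
    have he : HasDerivAt (fun s => Complex.exp (-(c * (G s : ℂ))))
        (Complex.exp (-(c * (G u : ℂ))) * (-(c * (Sf m zs u : ℂ)))) u := by
      have h3 : HasDerivAt (fun s => -(c * ((G s : ℝ) : ℂ))) (-(c * (Sf m zs u : ℂ))) u := by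
        have h4 := ((hG u).ofReal_comp.const_mul c).neg
        exact h4
      exact h3.cexp
    have h5 := (hh u).mul he
    refine h5.congr_deriv ?_; symm
    ring
  have hconst := is_const_of_deriv_eq_zero (𝕜 := ℝ)
    (fun u => (hΦ u).differentiableAt) (fun u => (hΦ u).deriv) t a
  have hΦa : Φ a = FF α m zs (pc a) := by
    simp [hΦdef, hGdef, intervalIntegral.integral_same]
  have hpcG : pc (G t) = Complex.exp (c * ((G t : ℝ) : ℂ)) := by rw [pc]
  calc FF α m zs (pc t) = Φ t * Complex.exp (c * ((G t : ℝ) : ℂ)) := by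
        rw [hΦdef]
        simp only []
        rw [mul_assoc, ← Complex.exp_add]
        simp
      _ = FF α m zs (pc a) * pc (G t) := by rw [hconst, hΦa, hpcG]


def KK {J : ℕ} (zs : Fin J → ℂ) : ℝ := ∑ j, (1 - ‖zs j‖) / (1 + ‖zs j‖)

lemma KK_le_rr {J : ℕ} {zs : Fin J → ℂ} (hz : ∀ j, ‖zs j‖ < 1) {ξ : ℂ} (hξ : ‖ξ‖ = 1) :
    KK zs ≤ rr zs ξ := by
  apply Finset.sum_le_sum
  intro j _
  have hx0 : (0:ℝ) ≤ ‖zs j‖ := norm_nonneg _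
  have hx1 : ‖zs j‖ < 1 := hz j
  have hn0 : 0 < ‖ξ - zs j‖ := by
    rw [norm_pos_iff, sub_ne_zero]
    intro h; rw [h] at hξ; exact absurd hξ (ne_of_lt hx1)
  have hn1 : ‖ξ - zs j‖ ≤ 1 + ‖zs j‖ := by
    calc ‖ξ - zs j‖ ≤ ‖ξ‖ + ‖zs j‖ := norm_sub_le _ _
    _ = 1 + ‖zs j‖ := by rw [hξ]
  have e1 : (1 - ‖zs j‖) / (1 + ‖zs j‖) = (1 - ‖zs j‖ ^ 2) / (1 + ‖zs j‖) ^ 2 := by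
    rw [div_eq_div_iff (by linarith) (by positivity)]
    ring
  rw [e1, div_le_div_iff₀ (by positivity) (by positivity)]
  have h2 : ‖ξ - zs j‖ ^ 2 ≤ (1 + ‖zs j‖) ^ 2 := by nlinarith
  have h3 : (0:ℝ) ≤ 1 - ‖zs j‖ ^ 2 := by nlinarith
  nlinarith [mul_le_mul_of_nonneg_left h2 h3]

lemma KK_nonneg {J : ℕ} {zs : Fin J → ℂ} (hz : ∀ j, ‖zs j‖ < 1) : 0 ≤ KK zs := by
  apply Finset.sum_nonneg
  intro j _
  have h1 := hz j
  have h2 := norm_nonneg (zs j)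
  apply div_nonneg <;> linarith

lemma Sf_nonneg {m J : ℕ} {zs : Fin J → ℂ} (hz : ∀ j, ‖zs j‖ < 1) (t : ℝ) :
    0 ≤ Sf m zs t := by
  have h1 : 0 ≤ rr zs (pc t) := by
    apply Finset.sum_nonneg
    intro j _
    apply div_nonneg _ (sq_nonneg _)
    nlinarith [hz j, norm_nonneg (zs j)]
  have h2 : (0:ℝ) ≤ (m:ℝ) := Nat.cast_nonneg m
  rw [Sf]; linarith

lemma one_lt_bound {m J : ℕ} {zs : Fin J → ℂ} (hm : 1 ≤ m) (hmJ : 2 ≤ m + J)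
    (hz : ∀ j, ‖zs j‖ < 1) : 1 < (m : ℝ) + KK zs := by
  rcases Nat.lt_or_ge m 2 with h | h
  · have hJ : 0 < J := by omega
    haveI : Nonempty (Fin J) := Fin.pos_iff_nonempty.mp hJ
    have hK : 0 < KK zs := by
      apply Finset.sum_pos _ Finset.univ_nonempty
      intro j _
      have h1 := hz j
      have h2 := norm_nonneg (zs j)
      apply div_pos (by linarith) (by linarith)
    have : (1:ℝ) ≤ (m:ℝ) := by exact_mod_cast hm
    linarith
  · have : (2:ℝ) ≤ (m:ℝ) := by exact_mod_cast h
    have := KK_nonneg hz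
    linarith

/-- A finite Blaschke product fixing the origin which is not a rotation has
`min {|f'(ξ)| : ξ ∈ ∂𝔻} > 1`, and consequently the boundary map is expanding:
`m(f(I)) > m(I)` for every proper (nondegenerate) subarc `I ⊊ ∂𝔻`. -/
theorem blaschke_expanding (f : ℂ → ℂ) (hf : IsFBPN f) (hf0 : f 0 = 0) :
    1 < C0min f ∧
    ∀ ξ ∈ uc, ∀ ℓ : ℝ, 0 < ℓ → ℓ < 1 → mA (carc ξ ℓ) < mA (f '' carc ξ ℓ) := by
  obtain ⟨α, m, J, zs, hα, hm, hmJ, hz, hff⟩ := hf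
  have hfeq : f = FF α m zs := funext fun w => by rw [hff w]; rfl
  have hB : 1 < (m : ℝ) + KK zs := one_lt_bound hm hmJ hz
  constructor
  · -- Part 1
    have hne : ((fun ξ => ‖deriv f ξ‖) '' uc).Nonempty :=
      ⟨‖deriv f 1‖, ⟨1, show ‖(1:ℂ)‖ = 1 by simp, rfl⟩⟩
    refine lt_of_lt_of_le hB (le_csInf hne ?_)
    rintro y ⟨ξ, hξ, rfl⟩
    have hξn : ‖ξ‖ = 1 := hξ
    have hξ0 : ξ ≠ 0 := by intro h; rw [h] at hξn; simp at hξn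
    have hd : deriv f ξ = FF α m zs ξ * (((m : ℝ) + rr zs ξ : ℝ) : ℂ) / ξ := by
      rw [hfeq]; exact (hasDerivAt_FF hm hz hξn).deriv
    have hrr : 0 ≤ rr zs ξ := by
      apply Finset.sum_nonneg
      intro j _
      apply div_nonneg _ (sq_nonneg _)
      nlinarith [hz j, norm_nonneg (zs j)]
    simp only []
    rw [hd, norm_div, norm_mul, FF_norm hα hz hξn, hξn, Complex.norm_real,
      Real.norm_eq_abs, abs_of_nonneg (by positivity), one_mul, div_one]
    have := KK_le_rr hz hξn
    linarith
  · -- Part 2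
    intro ξ hξ ℓ hℓ0 hℓ1
    have hξn : ‖ξ‖ = 1 := hξ
    set a : ℝ := ξ.arg / (2 * Real.pi) - ℓ / 2 with ha
    set b : ℝ := ξ.arg / (2 * Real.pi) + ℓ / 2 with hb
    have hab : a ≤ b := by rw [ha, hb]; linarith
    have hba : b - a = ℓ := by rw [ha, hb]; ring
    have hcarc : carc ξ ℓ = pc '' Set.Icc a b := by
      rw [carc, if_neg (not_le.mpr hℓ1)]
    have hmAc : mA (carc ξ ℓ) = ℓ := by
      rw [hcarc, mA, μc_arc hab (by rw [hba]; exact hℓ1), hba,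
        ENNReal.toReal_ofReal (by linarith)]
    set g : ℝ := ∫ s in a..b, Sf m zs s with hgdef
    have hgl : ((m : ℝ) + KK zs) * ℓ ≤ g := by
      have h1 : ∫ s in a..b, ((m : ℝ) + KK zs) ≤ g := by
        rw [hgdef]
        apply intervalIntegral.integral_mono_on hab intervalIntegrable_const
          ((continuous_Sf hz).intervalIntegrable a b)
        intro x _
        have := KK_le_rr hz (pc_norm x)
        rw [Sf]
        linarith
      rwa [intervalIntegral.integral_const, smul_eq_mul, hba, mul_comm] at h1
    have hℓg : ℓ < g := by
      have : (1:ℝ) * ℓ < ((m : ℝ) + KK zs) * ℓ :=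
        mul_lt_mul_of_pos_right hB hℓ0
      linarith
    have hg0 : 0 ≤ g := by linarith
    -- the lift function
    set G : ℝ → ℝ := fun t => ∫ s in a..t, Sf m zs s with hGdef
    have hG : ∀ u, HasDerivAt G (Sf m zs u) u := fun u =>
      ((continuous_Sf hz).integral_hasStrictDerivAt a u).hasDerivAt
    have hGdiff : Differentiable ℝ G := fun u => (hG u).differentiableAt
    have hGmono : Monotone G := by
      apply monotone_of_deriv_nonneg hGdiff
      intro u
      rw [(hG u).deriv]
      exact Sf_nonneg hz u
    have hGa : G a = 0 := intervalIntegral.integral_same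
    have hGb : G b = g := rfl
    have hGimg : G '' Set.Icc a b = Set.Icc 0 g := by
      apply Set.Subset.antisymm
      · rintro y ⟨t, ht, rfl⟩
        exact ⟨by rw [← hGa]; exact hGmono ht.1, by rw [← hGb]; exact hGmono ht.2⟩
      · have h2 := intermediate_value_Icc hab hGdiff.continuous.continuousOn
        rwa [hGa, hGb] at h2
    have hFa : ‖FF α m zs (pc a)‖ = 1 := FF_norm hα hz (pc_norm a)
    set c0 : ℝ := (FF α m zs (pc a)).arg / (2 * Real.pi) with hc0def
    have hc0 : pc c0 = FF α m zs (pc a) := pc_arg hFa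
    have himg : f '' carc ξ ℓ = pc '' Set.Icc c0 (c0 + g) := by
      rw [hcarc, Set.image_image]
      have e1 : ∀ t ∈ Set.Icc a b, f (pc t) = pc c0 * pc (G t) := by
        intro t _
        rw [hfeq, hc0]
        exact lift_eq hm hz a t
      rw [Set.image_congr e1]
      have e2 : (fun t => pc c0 * pc (G t)) '' Set.Icc a b
          = (fun s => pc c0 * pc s) '' (G '' Set.Icc a b) := by
        rw [Set.image_image]
      rw [e2, hGimg]
      have e3 : (fun s : ℝ => pc c0 * pc s) '' Set.Icc 0 g
          = pc '' ((fun s => c0 + s) '' Set.Icc 0 g) := by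
        rw [Set.image_image]
        apply Set.image_congr
        intro s _
        rw [pc_mul]
      rw [e3, Set.image_const_add_Icc, add_zero]
    by_cases hg1 : g < 1
    · rw [hmAc, himg, mA, μc_arc (by linarith) (by linarith),
        ENNReal.toReal_ofReal (by linarith)]
      linarith
    · push_neg at hg1
      have huc : pc '' Set.Icc c0 (c0 + g) = uc := by
        apply Set.Subset.antisymm
        · rintro z ⟨t, _, rfl⟩; exact pc_norm t
        · rw [← pc_image_Icc_one c0]
          exact Set.image_mono (Set.Icc_subset_Icc_right (by linarith))
      rw [hmAc, himg, huc, mA, μc_uc]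
      simpa using hℓ1

end
end

section
/- Let f be a finite Blaschke product with f(0) = 0 which is not a rotation, and let (a_n) be a sequence of complex numbers tending to zero. For each positive integer N, let I_N ⊆ ∂𝔻 be an arc such that sup_N m(f^N(I_N)) < 1. Then max{|Σ_{k=1}^N a_k (f^k(ξ) − f^k(ξ'))| : ξ, ξ' ∈ I_N} → 0 as N → ∞. -/
open MeasureTheory Filter
open scoped Classical ENNReal Topology

noncomputable section

namespace DN

local notation "conj'" => starRingEnd ℂ

/-! ### Basic facts about the circle parametrisation `pc` -/

lemma norm_pc (t : ℝ) : ‖pc t‖ = 1 := by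
  simp [pc, Complex.norm_exp]

lemma continuous_pc : Continuous pc :=
  Complex.continuous_exp.comp (continuous_const.mul Complex.continuous_ofReal)

lemma hasDerivAt_pc (t : ℝ) : HasDerivAt pc (2 * Real.pi * Complex.I * pc t) t := by
  have h : HasDerivAt (fun w : ℂ => Complex.exp (2 * Real.pi * Complex.I * w))
      (2 * Real.pi * Complex.I * Complex.exp (2 * Real.pi * Complex.I * (t:ℂ))) (t:ℂ) := by
    have h0 := ((hasDerivAt_id (t:ℂ)).const_mul (2 * Real.pi * Complex.I)).cexp
    exact h0.congr_deriv (by rw [id_eq, mul_one, mul_comm])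
  exact h.comp_ofReal

lemma pc_add_int (t : ℝ) (n : ℤ) : pc (t + n) = pc t := by
  simp only [pc]; push_cast
  rw [mul_add, Complex.exp_add,
    show (2 * (Real.pi:ℂ) * Complex.I * (n:ℂ)) = (n:ℤ) * (2 * Real.pi * Complex.I) by
      push_cast; ring,
    Complex.exp_int_mul_two_pi_mul_I, mul_one]

lemma pc_surj {z : ℂ} (hz : z ∈ uc) : pc (Complex.arg z / (2 * Real.pi)) = z := by
  have h1 : ‖z‖ = 1 := by simpa [uc] using hz
  have h2 := Complex.norm_mul_exp_arg_mul_I z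
  rw [h1, Complex.ofReal_one, one_mul] at h2
  have hπ : (Real.pi : ℂ) ≠ 0 := by simpa using Real.pi_ne_zero
  rw [pc, show (2 * (Real.pi:ℂ) * Complex.I * ((Complex.arg z / (2 * Real.pi) : ℝ) : ℂ))
      = (Complex.arg z : ℂ) * Complex.I by push_cast; field_simp]
  exact h2

lemma pc_lip (x y : ℝ) : ‖pc x - pc y‖ ≤ 2 * Real.pi * |x - y| := by
  have h := Convex.norm_image_sub_le_of_norm_hasDerivWithin_le
    (f := pc) (f' := fun t => 2 * Real.pi * Complex.I * pc t) (C := 2 * Real.pi) (s := Set.univ)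
    (fun t _ => (hasDerivAt_pc t).hasDerivWithinAt)
    (fun t _ => by
      rw [norm_mul, norm_pc, mul_one, norm_mul, Complex.norm_I, mul_one]
      simp [abs_of_nonneg Real.pi_pos.le, Real.pi_pos.le])
    convex_univ (Set.mem_univ y) (Set.mem_univ x)
  simpa [Real.norm_eq_abs] using h

lemma pc_image_Icc_full {u v : ℝ} (h : 1 ≤ v - u) : pc '' Set.Icc u v = uc := by
  apply Set.Subset.antisymm
  · rintro _ ⟨t, _, rfl⟩; exact norm_pc t
  · intro z hz
    set t0 := Complex.arg z / (2 * Real.pi) with ht0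
    refine ⟨t0 + ⌈u - t0⌉, ⟨?_, ?_⟩, by rw [pc_add_int]; exact pc_surj hz⟩
    · have := Int.le_ceil (u - t0); linarith
    · have := Int.ceil_lt_add_one (u - t0); linarith

lemma mA_uc : mA uc = 1 := by
  have hm : MeasurableSet uc := (isClosed_eq (continuous_norm) continuous_const).measurableSet
  have : μc uc = 1 := by
    rw [μc, Measure.map_apply continuous_pc.measurable hm]
    have : pc ⁻¹' uc = Set.univ := by
      ext t; simp only [Set.mem_preimage, Set.mem_univ, iff_true]; exact norm_pc t
    rw [this]
    simp
  rw [mA, this]; rfl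

/-! ### Blaschke factor computations -/

def Pois (z ξ : ℂ) : ℝ := (1 - ‖z‖^2)/‖ξ - z‖^2

lemma fact_denom_ne {z ξ : ℂ} (hz : ‖z‖ < 1) (hξ : ‖ξ‖ = 1) : 1 - conj' z * ξ ≠ 0 := by
  intro h
  have : ‖conj' z * ξ‖ = 1 := by
    have : conj' z * ξ = 1 := by linear_combination -h
    rw [this, norm_one]
  rw [norm_mul, RCLike.norm_conj, hξ, mul_one] at this
  exact absurd this hz.ne

lemma fact_sub_ne {z ξ : ℂ} (hz : ‖z‖ < 1) (hξ : ‖ξ‖ = 1) : ξ - z ≠ 0 := by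
  intro h
  have : ξ = z := by linear_combination h
  rw [this] at hξ; exact hz.ne hξ

lemma mul_conj_self {ξ : ℂ} (hξ : ‖ξ‖ = 1) : ξ * conj' ξ = 1 := by
  rw [Complex.mul_conj]
  norm_cast
  rw [Complex.normSq_eq_norm_sq, hξ]; norm_num

lemma norm_sq_conj (w : ℂ) : ((‖w‖:ℂ))^2 = w * conj' w := by
  rw [Complex.mul_conj]
  norm_cast
  rw [Complex.normSq_eq_norm_sq]

lemma fact_norm_one {z ξ : ℂ} (hz : ‖z‖ < 1) (hξ : ‖ξ‖ = 1) :
    ‖(ξ - z)/(1 - conj' z * ξ)‖ = 1 := by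
  have key : 1 - conj' z * ξ = ξ * conj' (ξ - z) := by
    rw [map_sub]
    have := mul_conj_self hξ
    linear_combination -this
  rw [norm_div, key, norm_mul, RCLike.norm_conj, hξ, one_mul]
  rw [div_self]
  intro h
  exact fact_sub_ne hz hξ (by rwa [norm_eq_zero] at h)

lemma fact_hasDerivAt {z : ℂ} (ξ : ℂ) (hz : ‖z‖ < 1) (hξ : ‖ξ‖ = 1) :
    HasDerivAt (fun w => (w - z)/(1 - conj' z * w))
      ((1 - (‖z‖:ℂ)^2)/(1 - conj' z * ξ)^2) ξ := by
  have h1 : HasDerivAt (fun w : ℂ => w - z) 1 ξ := (hasDerivAt_id ξ).sub_const z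
  have h2 : HasDerivAt (fun w : ℂ => 1 - conj' z * w) (-(conj' z)) ξ := by
    simpa using ((hasDerivAt_id ξ).const_mul (conj' z)).const_sub 1
  have := h1.div h2 (fact_denom_ne hz hξ)
  refine this.congr_deriv ?_
  rw [norm_sq_conj]
  congr 1
  ring

lemma fact_ratio {z ξ : ℂ} (hz : ‖z‖ < 1) (hξ : ‖ξ‖ = 1) :
    ξ * ((1 - (‖z‖:ℂ)^2)/(1 - conj' z * ξ)^2)
      = ((ξ - z)/(1 - conj' z * ξ)) * ((Pois z ξ : ℝ) : ℂ) := by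
  have hd := fact_denom_ne hz hξ
  have hs := fact_sub_ne hz hξ
  have hns : ((‖ξ - z‖:ℂ)) ≠ 0 := by
    simpa using (norm_ne_zero_iff.mpr hs)
  have h1 : ξ * conj' ξ = 1 := mul_conj_self hξ
  have h2 : ((‖ξ - z‖:ℂ))^2 = (ξ - z) * (conj' ξ - conj' z) := by
    rw [norm_sq_conj, map_sub]
  have hD2 : (1 - conj' z * ξ)^2 ≠ 0 := pow_ne_zero _ hd
  have hDN : (1 - conj' z * ξ) * ((‖ξ - z‖:ℂ))^2 ≠ 0 := mul_ne_zero hd (pow_ne_zero _ hns)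
  rw [Pois]
  push_cast
  rw [mul_div_assoc', div_mul_div_comm, div_eq_div_iff hD2 hDN]
  linear_combination (1 - (‖z‖:ℂ)^2)*(1 - conj' z * ξ)*ξ*h2
    + (1 - (‖z‖:ℂ)^2)*(1 - conj' z * ξ)*(ξ-z)*h1

/-! ### The Blaschke product, its modulus and derivative on the circle -/

def fB (α : ℂ) (m : ℕ) {J : ℕ} (zs : Fin J → ℂ) (w : ℂ) : ℂ :=
  α * w ^ m * ∏ j, (w - zs j)/(1 - conj' (zs j) * w)

lemma norm_fB {α : ℂ} {m J : ℕ} {zs : Fin J → ℂ} (hα : ‖α‖ = 1)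
    (hzs : ∀ j, ‖zs j‖ < 1) {ξ : ℂ} (hξ : ‖ξ‖ = 1) : ‖fB α m zs ξ‖ = 1 := by
  rw [fB, norm_mul, norm_mul, hα, norm_pow, hξ, one_pow, mul_one, one_mul, norm_prod]
  exact Finset.prod_eq_one (fun j _ => fact_norm_one (hzs j) hξ)

lemma deriv_fB {α : ℂ} {m J : ℕ} {zs : Fin J → ℂ} (hm : 1 ≤ m)
    (hzs : ∀ j, ‖zs j‖ < 1) {ξ : ℂ} (hξ : ‖ξ‖ = 1) :
    ∃ d : ℂ, HasDerivAt (fB α m zs) d ξ ∧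
      ξ * d = fB α m zs ξ * ((((m:ℝ) + ∑ j, Pois (zs j) ξ) : ℝ) : ℂ) := by
  set B := fun (j : Fin J) (w : ℂ) => (w - zs j)/(1 - conj' (zs j) * w) with hB
  set b' := fun (j : Fin J) => (1 - ((‖zs j‖:ℂ))^2)/(1 - conj' (zs j) * ξ)^2 with hb'
  have hprod : HasDerivAt (fun w => ∏ j, B j w)
      (∑ j, (∏ k ∈ Finset.univ.erase j, B k ξ) • b' j) ξ :=
    HasDerivAt.fun_finsetProd (fun j _ => fact_hasDerivAt ξ (hzs j) hξ)
  have hpow : HasDerivAt (fun w : ℂ => α * w ^ m) (α * (m * ξ^(m-1))) ξ :=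
    (hasDerivAt_pow m ξ).const_mul α
  refine ⟨_, hpow.mul hprod, ?_⟩
  have hξm : ξ * ξ^(m-1) = ξ^m := by
    rw [← pow_succ']
    congr 1
    omega
  have hsum : ξ * (∑ j, (∏ k ∈ Finset.univ.erase j, B k ξ) • b' j)
      = (∏ j, B j ξ) * (((∑ j, Pois (zs j) ξ : ℝ)) : ℂ) := by
    rw [Finset.mul_sum]
    push_cast
    rw [Finset.mul_sum]
    refine Finset.sum_congr rfl (fun j _ => ?_)
    rw [smul_eq_mul]
    have hr : ξ * b' j = B j ξ * ((Pois (zs j) ξ : ℝ) : ℂ) := fact_ratio (hzs j) hξ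
    calc ξ * ((∏ k ∈ Finset.univ.erase j, B k ξ) * b' j)
        = (∏ k ∈ Finset.univ.erase j, B k ξ) * (ξ * b' j) := by ring
      _ = (∏ k ∈ Finset.univ.erase j, B k ξ) * (B j ξ * ((Pois (zs j) ξ : ℝ) : ℂ)) := by rw [hr]
      _ = (B j ξ * ∏ k ∈ Finset.univ.erase j, B k ξ) * ((Pois (zs j) ξ : ℝ) : ℂ) := by ring
      _ = (∏ j, B j ξ) * ((Pois (zs j) ξ : ℝ) : ℂ) :=
          congrArg (· * ((Pois (zs j) ξ : ℝ) : ℂ))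
            (Finset.mul_prod_erase Finset.univ (fun k => B k ξ) (Finset.mem_univ j))
  have expand : ξ * (α * (m * ξ^(m-1)) * (∏ j, B j ξ)
        + (α * ξ ^ m) * (∑ j, (∏ k ∈ Finset.univ.erase j, B k ξ) • b' j))
      = α * ξ^m * (∏ j, B j ξ) * (((((m:ℝ) + ∑ j, Pois (zs j) ξ) : ℝ)) : ℂ) := by
    rw [mul_add]
    have e1 : ξ * (α * (m * ξ^(m-1)) * (∏ j, B j ξ)) = α * ξ^m * (∏ j, B j ξ) * (m:ℂ) := by
      rw [← hξm]; ring
    have e2 : ξ * ((α * ξ ^ m) * (∑ j, (∏ k ∈ Finset.univ.erase j, B k ξ) • b' j))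
        = α * ξ^m * ((∏ j, B j ξ) * (((∑ j, Pois (zs j) ξ : ℝ)) : ℂ)) := by
      rw [← hsum]; ring
    rw [e1, e2]
    push_cast
    ring
  rw [expand, fB]

/-! ### The lift `gl` and its expansion -/

def hfun {J : ℕ} (m : ℕ) (zs : Fin J → ℂ) (t : ℝ) : ℝ := m + ∑ j, Pois (zs j) (pc t)
def lam {J : ℕ} (m : ℕ) (zs : Fin J → ℂ) : ℝ := m + ∑ j, (1 - ‖zs j‖)/(1 + ‖zs j‖)

lemma pois_lower {z ξ : ℂ} (hz : ‖z‖ < 1) (hξ : ‖ξ‖ = 1) :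
    (1 - ‖z‖)/(1 + ‖z‖) ≤ Pois z ξ := by
  have h0 : (0:ℝ) < 1 + ‖z‖ := by positivity
  have hnum : (0:ℝ) ≤ 1 - ‖z‖^2 := by nlinarith [norm_nonneg z]
  have hd : (0:ℝ) < ‖ξ - z‖ := by
    rw [norm_pos_iff, sub_ne_zero]
    intro h; rw [h] at hξ; exact hz.ne hξ
  have hle : ‖ξ - z‖ ≤ 1 + ‖z‖ := by
    calc ‖ξ - z‖ ≤ ‖ξ‖ + ‖z‖ := norm_sub_le _ _
      _ = 1 + ‖z‖ := by rw [hξ]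
  have step1 : (1 - ‖z‖^2)/(1 + ‖z‖)^2 ≤ (1 - ‖z‖^2)/‖ξ - z‖^2 := by
    gcongr <;> first | exact hle | exact sq_pos_of_pos hd | positivity
  have step2 : (1 - ‖z‖)/(1 + ‖z‖) = (1 - ‖z‖^2)/(1 + ‖z‖)^2 := by
    rw [div_eq_div_iff h0.ne' (by positivity)]
    ring
  rw [step2, Pois]
  exact step1

lemma hfun_ge {J : ℕ} {m : ℕ} {zs : Fin J → ℂ} (hzs : ∀ j, ‖zs j‖ < 1) (t : ℝ) :
    lam m zs ≤ hfun m zs t := by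
  rw [lam, hfun]
  gcongr with j _
  exact pois_lower (hzs j) (norm_pc t)

lemma sum_pois_nonneg {J : ℕ} {zs : Fin J → ℂ} (hzs : ∀ j, ‖zs j‖ < 1) :
    (0:ℝ) ≤ ∑ j, (1 - ‖zs j‖)/(1 + ‖zs j‖) :=
  Finset.sum_nonneg (fun j _ => by
    have h1 := (hzs j).le
    have h2 := norm_nonneg (zs j)
    have h3 : (0:ℝ) ≤ 1 - ‖zs j‖ := by linarith
    positivity)

lemma lam_ge_one {J : ℕ} {m : ℕ} {zs : Fin J → ℂ} (hm : 1 ≤ m) (hzs : ∀ j, ‖zs j‖ < 1) :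
    1 ≤ lam m zs := by
  rw [lam]
  have hs := sum_pois_nonneg hzs
  have hm' : (1:ℝ) ≤ m := by exact_mod_cast hm
  linarith

lemma lam_gt_one {J : ℕ} {m : ℕ} {zs : Fin J → ℂ} (hm : 1 ≤ m) (hdeg : 2 ≤ m + J)
    (hzs : ∀ j, ‖zs j‖ < 1) : 1 < lam m zs := by
  rw [lam]
  rcases Nat.lt_or_ge m 2 with hm2 | hm2
  · have hJ : (Finset.univ : Finset (Fin J)).Nonempty := by
      rw [Finset.univ_nonempty_iff]
      exact Fin.pos_iff_nonempty.mp (by omega)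
    have hpos : (0:ℝ) < ∑ j, (1 - ‖zs j‖)/(1 + ‖zs j‖) :=
      Finset.sum_pos (fun j _ => by
        have h1 := hzs j
        have h2 := norm_nonneg (zs j)
        have h3 : (0:ℝ) < 1 - ‖zs j‖ := by linarith
        positivity) hJ
    have hm' : (1:ℝ) ≤ m := by exact_mod_cast hm
    linarith
  · have hm' : (2:ℝ) ≤ m := by exact_mod_cast hm2
    have := sum_pois_nonneg hzs
    linarith

lemma continuous_hfun {J : ℕ} {m : ℕ} {zs : Fin J → ℂ} (hzs : ∀ j, ‖zs j‖ < 1) :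
    Continuous (hfun m zs) := by
  unfold hfun
  refine continuous_const.add (continuous_finset_sum _ (fun j _ => ?_))
  unfold Pois
  refine continuous_const.div ?_ ?_
  · exact (continuous_norm.comp (continuous_pc.sub continuous_const)).pow 2
  · intro t
    have hne : pc t ≠ zs j := by
      intro h; exact (hzs j).ne (h ▸ norm_pc t)
    exact pow_ne_zero _ (norm_ne_zero_iff.mpr (sub_ne_zero.mpr hne))

def gl (α : ℂ) (m : ℕ) {J : ℕ} (zs : Fin J → ℂ) (t : ℝ) : ℝ :=
  Complex.arg (α * 1 ^ m * ∏ j, ((1:ℂ) - zs j)/(1 - conj' (zs j) * 1)) / (2*Real.pi)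
    + ∫ s in (0:ℝ)..t, hfun m zs s

lemma hasDerivAt_gl {α : ℂ} {J : ℕ} {m : ℕ} {zs : Fin J → ℂ} (hzs : ∀ j, ‖zs j‖ < 1)
    (t : ℝ) : HasDerivAt (gl α m zs) (hfun m zs t) t := by
  have hc := continuous_hfun (m := m) hzs
  have := (intervalIntegral.integral_hasDerivAt_right
    (hc.intervalIntegrable 0 t) (hc.stronglyMeasurableAtFilter _ _)
    hc.continuousAt : HasDerivAt (fun u => ∫ s in (0:ℝ)..u, hfun m zs s) (hfun m zs t) t)
  exact this.const_add _

lemma continuous_gl {α : ℂ} {J : ℕ} {m : ℕ} {zs : Fin J → ℂ} (hzs : ∀ j, ‖zs j‖ < 1) :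
    Continuous (gl α m zs) := by
  have : Differentiable ℝ (gl α m zs) := fun t => (hasDerivAt_gl hzs t).differentiableAt
  exact this.continuous

lemma gl_expand {α : ℂ} {J : ℕ} {m : ℕ} {zs : Fin J → ℂ} (hzs : ∀ j, ‖zs j‖ < 1)
    {a b : ℝ} (hab : a ≤ b) : lam m zs * (b - a) ≤ gl α m zs b - gl α m zs a := by
  have hc := continuous_hfun (m := m) hzs
  have hsplit : gl α m zs b - gl α m zs a = ∫ s in a..b, hfun m zs s := by
    rw [gl, gl]
    rw [add_sub_add_left_eq_sub]
    rw [← intervalIntegral.integral_add_adjacent_intervals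
      (hc.intervalIntegrable 0 a) (hc.intervalIntegrable a b)]
    ring
  rw [hsplit]
  calc lam m zs * (b - a) = ∫ _ in a..b, lam m zs := by
        rw [intervalIntegral.integral_const, smul_eq_mul]; ring
    _ ≤ ∫ s in a..b, hfun m zs s :=
        intervalIntegral.integral_mono_on hab (intervalIntegrable_const)
          (hc.intervalIntegrable a b) (fun s _ => hfun_ge hzs s)

/-! ### The lift identity -/

lemma lift_eq {α : ℂ} {m J : ℕ} {zs : Fin J → ℂ} (hα : ‖α‖ = 1) (hm : 1 ≤ m)
    (hzs : ∀ j, ‖zs j‖ < 1) (t : ℝ) : fB α m zs (pc t) = pc (gl α m zs t) := by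
  set u : ℝ → ℂ := fun t => fB α m zs (pc t) with hu
  set v : ℝ → ℂ := fun t => pc (gl α m zs t) with hv
  set w : ℝ → ℂ := fun t => u t * conj' (v t) with hw
  have hud : ∀ s : ℝ, HasDerivAt u ((2 * Real.pi * Complex.I * (hfun m zs s : ℝ)) * u s) s := by
    intro s
    obtain ⟨d, hd, hξd⟩ := deriv_fB (α := α) hm hzs (norm_pc s)
    have h1 : HasDerivAt u (d * (2 * Real.pi * Complex.I * pc s)) s :=
      (hd.comp s (hasDerivAt_pc s))
    convert h1 using 1
    have heq : pc s * d = u s * ((hfun m zs s : ℝ) : ℂ) := by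
      rw [hξd]; rfl
    calc (2 * Real.pi * Complex.I * (hfun m zs s : ℝ)) * u s
        = (2 * Real.pi * Complex.I) * (u s * ((hfun m zs s : ℝ) : ℂ)) := by ring
      _ = (2 * Real.pi * Complex.I) * (pc s * d) := by rw [heq]
      _ = d * (2 * Real.pi * Complex.I * pc s) := by ring
  have hvd : ∀ s : ℝ, HasDerivAt v ((2 * Real.pi * Complex.I * (hfun m zs s : ℝ)) * v s) s := by
    intro s
    have h1 := HasDerivAt.scomp s (hasDerivAt_pc (gl α m zs s)) (hasDerivAt_gl hzs s)
    refine h1.congr_deriv ?_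
    rw [Complex.real_smul]
    ring
  have hwd : ∀ s : ℝ, HasDerivAt w 0 s := by
    intro s
    have h1 := (hud s).mul ((hvd s).star)
    have h2 : (u * fun x => star (v x)) = w := rfl
    rw [h2] at h1
    refine h1.congr_deriv ?_
    simp only [star_mul', Complex.star_def, map_mul, Complex.conj_I, Complex.conj_ofReal,
      map_ofNat]
    ring
  have hconst : ∀ s : ℝ, w s = w 0 := by
    intro s
    have hdiff : Differentiable ℝ w := fun x => (hwd x).differentiableAt
    have hderiv : ∀ x, deriv w x = 0 := fun x => (hwd x).deriv
    exact is_const_of_deriv_eq_zero hdiff hderiv s 0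
  have hpc0 : pc 0 = 1 := by simp [pc]
  have hnf1 : ‖fB α m zs 1‖ = 1 := norm_fB hα hzs (by norm_num)
  have hv0 : v 0 = fB α m zs 1 := by
    rw [hv]
    simp only []
    rw [gl]
    rw [intervalIntegral.integral_same, add_zero]
    exact pc_surj hnf1
  have hu0 : u 0 = fB α m zs 1 := by rw [hu]; simp only []; rw [hpc0]
  have hw0 : w 0 = 1 := by
    rw [hw]; simp only []; rw [hu0, hv0]; exact mul_conj_self hnf1
  have h3 : u t * conj' (v t) = 1 := (hconst t).trans hw0
  have h4 : v t * conj' (v t) = 1 := mul_conj_self (norm_pc _)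
  have h5 : conj' (v t) ≠ 0 := by
    intro h; rw [h, mul_zero] at h4; exact one_ne_zero h4.symm
  have h6 : u t = v t := by
    have : (u t - v t) * conj' (v t) = 0 := by rw [sub_mul, h3, h4, sub_self]
    rcases mul_eq_zero.mp this with h | h
    · linear_combination h
    · exact absurd h h5
  exact h6

/-! ### Iterates -/

lemma lift_iter {α : ℂ} {m J : ℕ} {zs : Fin J → ℂ} (hα : ‖α‖ = 1) (hm : 1 ≤ m)
    (hzs : ∀ j, ‖zs j‖ < 1) (N : ℕ) (t : ℝ) :
    (fB α m zs)^[N] (pc t) = pc ((gl α m zs)^[N] t) := by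
  induction N generalizing t with
  | zero => simp
  | succ N ih =>
    rw [Function.iterate_succ_apply, Function.iterate_succ_apply,
      lift_eq hα hm hzs t, ih]

lemma gl_iter_expand {α : ℂ} {J : ℕ} {m : ℕ} {zs : Fin J → ℂ} (hm : 1 ≤ m)
    (hzs : ∀ j, ‖zs j‖ < 1) (N : ℕ) {a b : ℝ} (hab : a ≤ b) :
    lam m zs ^ N * (b - a) ≤ (gl α m zs)^[N] b - (gl α m zs)^[N] a := by
  induction N generalizing a b with
  | zero => simp
  | succ N ih =>
    have h1 := ih hab
    have hlam : (0:ℝ) < lam m zs := lt_of_lt_of_le one_pos (lam_ge_one hm hzs)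
    have hAB : (gl α m zs)^[N] a ≤ (gl α m zs)^[N] b := by
      nlinarith [pow_pos hlam N]
    have h2 := gl_expand (α := α) (m := m) hzs hAB
    rw [Function.iterate_succ_apply', Function.iterate_succ_apply']
    calc lam m zs ^ (N+1) * (b - a)
        = lam m zs * (lam m zs ^ N * (b - a)) := by ring
      _ ≤ lam m zs * ((gl α m zs)^[N] b - (gl α m zs)^[N] a) := by
          exact mul_le_mul_of_nonneg_left h1 hlam.le
      _ ≤ _ := by linarith

lemma gl_iter_mono {α : ℂ} {J : ℕ} {m : ℕ} {zs : Fin J → ℂ} (hm : 1 ≤ m)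
    (hzs : ∀ j, ‖zs j‖ < 1) (N : ℕ) {a b : ℝ} (hab : a ≤ b) :
    (gl α m zs)^[N] a ≤ (gl α m zs)^[N] b := by
  have h1 := gl_iter_expand (α := α) hm hzs N hab
  have hlam : (0:ℝ) < lam m zs := lt_of_lt_of_le one_pos (lam_ge_one hm hzs)
  nlinarith [pow_pos hlam N]

/-! ### Arc representation -/

lemma carc_repr (ξ0 : ℂ) {ℓ0 : ℝ} (hℓ0 : 0 ≤ ℓ0) :
    ∃ A B : ℝ, A ≤ B ∧ carc ξ0 ℓ0 = pc '' Set.Icc A B := by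
  rw [carc]
  split_ifs with h
  · exact ⟨0, 1, by norm_num, (pc_image_Icc_full (by norm_num)).symm⟩
  · exact ⟨_, _, by linarith, rfl⟩

/-! ### Geometric sum bound -/

lemma geom_tail_le {r : ℝ} (hr0 : 0 ≤ r) (hr1 : r < 1) (K N : ℕ) :
    ∑ k ∈ Finset.Ioc K N, r ^ (N - k) ≤ 1/(1 - r) := by
  have hinj : ∀ k1 ∈ Finset.Ioc K N, ∀ k2 ∈ Finset.Ioc K N,
      N - k1 = N - k2 → k1 = k2 := by
    intro k1 h1 k2 h2 h
    rw [Finset.mem_Ioc] at h1 h2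
    omega
  have himg := Finset.sum_image (s := Finset.Ioc K N) (g := fun k => N - k)
    (f := fun j => r ^ j) hinj
  have hsub : (Finset.Ioc K N).image (fun k => N - k) ⊆ Finset.range (N+1) := by
    intro j hj
    rw [Finset.mem_image] at hj
    obtain ⟨k, hk, rfl⟩ := hj
    rw [Finset.mem_Ioc] at hk
    rw [Finset.mem_range]
    omega
  calc ∑ k ∈ Finset.Ioc K N, r ^ (N - k)
      = ∑ j ∈ (Finset.Ioc K N).image (fun k => N - k), r ^ j := himg.symm
    _ ≤ ∑ j ∈ Finset.range (N+1), r ^ j :=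
        Finset.sum_le_sum_of_subset_of_nonneg hsub (fun j _ _ => pow_nonneg hr0 j)
    _ = (r ^ (N+1) - 1)/(r - 1) := geom_sum_eq hr1.ne (N+1)
    _ ≤ 1/(1 - r) := by
        have h1 : (0:ℝ) < 1 - r := by linarith
        have h2 : (0:ℝ) ≤ r ^ (N+1) := pow_nonneg hr0 _
        have h3 : (r ^ (N+1) - 1)/(r - 1) = (1 - r ^ (N+1))/(1 - r) := by
          rw [div_eq_div_iff (by linarith) h1.ne']
          ring
        rw [h3]
        gcongr
        linarith

end DN

/-- oscillation control for sequences, Donaire–Nicolau Corollary 2.3. -/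
theorem oscillation_control_sequence (f : ℂ → ℂ) (hf : IsFBPN f) (hf0 : f 0 = 0)
    (a : ℕ → ℂ) (ha : Tendsto a atTop (𝓝 0))
    (ξc : ℕ → ℂ) (ℓ : ℕ → ℝ) (hξc : ∀ N, ξc N ∈ uc) (hℓ : ∀ N, 0 ≤ ℓ N)
    (hsup : ∃ s : ℝ, s < 1 ∧ ∀ N : ℕ, 1 ≤ N → mA (f^[N] '' carc (ξc N) (ℓ N)) ≤ s) :
    ∀ ε : ℝ, 0 < ε → ∀ᶠ N : ℕ in atTop,
      ∀ ξ ∈ carc (ξc N) (ℓ N), ∀ ξ' ∈ carc (ξc N) (ℓ N),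
        ‖∑ k ∈ Finset.Icc 1 N, a k * (f^[k] ξ - f^[k] ξ')‖ < ε := by
  classical
  obtain ⟨s, hs1, hs⟩ := hsup
  obtain ⟨α, m, J, zs, hα, hm, hdeg, hzs, hfe⟩ := hf
  have hffB : f = DN.fB α m zs := funext hfe
  subst hffB
  set lm := DN.lam m zs with hlm
  have hlm1 : 1 < lm := DN.lam_gt_one hm hdeg hzs
  set r : ℝ := lm⁻¹ with hrdef
  have hlm0 : (0:ℝ) < lm := by linarith
  have hr0 : 0 < r := inv_pos.mpr hlm0
  have hr1 : r < 1 := inv_lt_one_of_one_lt₀ hlm1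
  set g := DN.gl α m zs with hgdef
  have hlift_iter : ∀ N t, (DN.fB α m zs)^[N] (pc t) = pc (g^[N] t) :=
    fun N t => DN.lift_iter hα hm hzs N t
  have hexp : ∀ N (A B : ℝ), A ≤ B → lm ^ N * (B - A) ≤ g^[N] B - g^[N] A :=
    fun N A B h => DN.gl_iter_expand hm hzs N h
  have hmono : ∀ N (A B : ℝ), A ≤ B → g^[N] A ≤ g^[N] B :=
    fun N A B h => DN.gl_iter_mono hm hzs N h
  have hcont : ∀ N, Continuous (g^[N]) := fun N => (DN.continuous_gl hzs).iterate N
  -- bound on the sequence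
  obtain ⟨C, hC⟩ : ∃ C : ℝ, ∀ k, ‖a k‖ ≤ C := by
    obtain ⟨C, hC⟩ := (ha.norm).bddAbove_range
    exact ⟨C, fun k => hC ⟨k, rfl⟩⟩
  have hC0 : (0:ℝ) ≤ C := le_trans (norm_nonneg _) (hC 0)
  intro ε hε
  have hπ := Real.pi_pos
  set ε1 : ℝ := ε * (1 - r) / (4 * Real.pi + 1) with hε1def
  have hε1pos : 0 < ε1 := by
    have : (0:ℝ) < 1 - r := by linarith
    positivity
  obtain ⟨K, hK⟩ : ∃ K : ℕ, ∀ k, K ≤ k → ‖a k‖ < ε1 := by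
    have hn := ha.norm
    rw [norm_zero] at hn
    have : ∀ᶠ k in atTop, ‖a k‖ < ε1 := hn.eventually (gt_mem_nhds hε1pos)
    exact eventually_atTop.mp this
  -- tail of the geometric bound tends to zero
  have htail0 : Tendsto (fun N : ℕ => C * (2 * Real.pi) * K * r ^ (N - K)) atTop (𝓝 0) := by
    have h1 : Tendsto (fun n : ℕ => r ^ n) atTop (𝓝 0) :=
      tendsto_pow_atTop_nhds_zero_of_lt_one hr0.le hr1
    have h2 : Tendsto (fun N : ℕ => N - K) atTop atTop := tendsto_sub_atTop_nat K
    have h3 := h1.comp h2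
    have := h3.const_mul (C * (2 * Real.pi) * K)
    simpa using this
  have htail : ∀ᶠ N : ℕ in atTop, C * (2 * Real.pi) * K * r ^ (N - K) < ε/2 :=
    htail0.eventually (gt_mem_nhds (by positivity))
  filter_upwards [eventually_ge_atTop (K+1), htail] with N hNK htailN
  intro ξ hξ ξ' hξ'
  have hN1 : 1 ≤ N := by omega
  have hKN : K ≤ N := by omega
  obtain ⟨A, B, hAB, hcarc⟩ := DN.carc_repr (ξc N) (hℓ N)
  -- the image of the arc under f^[N]
  have himg : (DN.fB α m zs)^[N] '' carc (ξc N) (ℓ N) = pc '' (g^[N] '' Set.Icc A B) := by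
    rw [hcarc, Set.image_image]
    have : (fun x => (DN.fB α m zs)^[N] (pc x)) = (fun x => pc (g^[N] x)) :=
      funext (fun x => hlift_iter N x)
    rw [this, ← Set.image_image]
  -- the crucial bound coming from the measure hypothesis
  have hGBA : g^[N] B - g^[N] A < 1 := by
    by_contra hcon
    push_neg at hcon
    have hfull : pc '' Set.Icc (g^[N] A) (g^[N] B) = uc := DN.pc_image_Icc_full hcon
    have hsub1 : Set.Icc (g^[N] A) (g^[N] B) ⊆ g^[N] '' Set.Icc A B :=
      intermediate_value_Icc hAB (hcont N).continuousOn
    have h1 : uc ⊆ (DN.fB α m zs)^[N] '' carc (ξc N) (ℓ N) := by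
      rw [himg, ← hfull]
      exact Set.image_mono hsub1
    have h2 : (DN.fB α m zs)^[N] '' carc (ξc N) (ℓ N) ⊆ uc := by
      rw [himg]
      rintro _ ⟨t, _, rfl⟩
      exact DN.norm_pc t
    have heq : (DN.fB α m zs)^[N] '' carc (ξc N) (ℓ N) = uc := Set.Subset.antisymm h2 h1
    have hval : mA ((DN.fB α m zs)^[N] '' carc (ξc N) (ℓ N)) = 1 := by
      rw [heq]; exact DN.mA_uc
    have := hs N hN1
    rw [hval] at this
    linarith
  -- widths of the intermediate arcs
  have hwidth : ∀ k, k ≤ N → g^[k] B - g^[k] A ≤ r ^ (N - k) := by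
    intro k hkN
    have hdecomp : ∀ x : ℝ, g^[N] x = g^[N-k] (g^[k] x) := by
      intro x
      rw [← Function.iterate_add_apply]
      congr 1
      omega
    have h1 := hexp (N-k) (g^[k] A) (g^[k] B) (hmono k A B hAB)
    rw [← hdecomp A, ← hdecomp B] at h1
    have h2 : lm ^ (N-k) * (g^[k] B - g^[k] A) ≤ 1 := le_trans h1 hGBA.le
    have hlmpow : (0:ℝ) < lm ^ (N-k) := pow_pos hlm0 _
    rw [hrdef, inv_pow, ← one_div]
    rw [le_div_iff₀ hlmpow]
    linarith [h2, mul_comm (lm ^ (N-k)) (g^[k] B - g^[k] A)]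
  -- pointwise bound for each iterate
  rw [hcarc] at hξ hξ'
  obtain ⟨x, hx, rfl⟩ := hξ
  obtain ⟨y, hy, rfl⟩ := hξ'
  have hterm : ∀ k ∈ Finset.Icc 1 N,
      ‖a k * ((DN.fB α m zs)^[k] (pc x) - (DN.fB α m zs)^[k] (pc y))‖
        ≤ ‖a k‖ * (2 * Real.pi * r ^ (N - k)) := by
    intro k hk
    rw [Finset.mem_Icc] at hk
    rw [hlift_iter k x, hlift_iter k y, norm_mul]
    have hxa : g^[k] A ≤ g^[k] x := hmono k A x hx.1
    have hxb : g^[k] x ≤ g^[k] B := hmono k x B hx.2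
    have hya : g^[k] A ≤ g^[k] y := hmono k A y hy.1
    have hyb : g^[k] y ≤ g^[k] B := hmono k y B hy.2
    have habs : |g^[k] x - g^[k] y| ≤ g^[k] B - g^[k] A := by
      rw [abs_sub_le_iff]
      constructor <;> linarith
    have h1 : ‖pc (g^[k] x) - pc (g^[k] y)‖ ≤ 2 * Real.pi * r ^ (N - k) := by
      calc ‖pc (g^[k] x) - pc (g^[k] y)‖
          ≤ 2 * Real.pi * |g^[k] x - g^[k] y| := DN.pc_lip _ _
        _ ≤ 2 * Real.pi * (g^[k] B - g^[k] A) := by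
            apply mul_le_mul_of_nonneg_left habs (by positivity)
        _ ≤ 2 * Real.pi * r ^ (N - k) := by
            apply mul_le_mul_of_nonneg_left (hwidth k hk.2) (by positivity)
    exact mul_le_mul_of_nonneg_left h1 (norm_nonneg _)
  -- assemble the sum bound
  have hsum1 : ‖∑ k ∈ Finset.Icc 1 N, a k * ((DN.fB α m zs)^[k] (pc x) - (DN.fB α m zs)^[k] (pc y))‖
      ≤ ∑ k ∈ Finset.Icc 1 N, ‖a k‖ * (2 * Real.pi * r ^ (N - k)) :=
    le_trans (norm_sum_le _ _) (Finset.sum_le_sum hterm)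
  have hIcc : Finset.Icc 1 N = Finset.Ioc 0 N := by
    rw [← Finset.Icc_add_one_left_eq_Ioc, zero_add]
  have hsplit : ∑ k ∈ Finset.Ioc 0 N, ‖a k‖ * (2 * Real.pi * r ^ (N - k))
      = ∑ k ∈ Finset.Ioc 0 K, ‖a k‖ * (2 * Real.pi * r ^ (N - k))
        + ∑ k ∈ Finset.Ioc K N, ‖a k‖ * (2 * Real.pi * r ^ (N - k)) :=
    (Finset.sum_Ioc_consecutive _ (Nat.zero_le K) hKN).symm
  have hpart1 : ∑ k ∈ Finset.Ioc 0 K, ‖a k‖ * (2 * Real.pi * r ^ (N - k))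
      ≤ C * (2 * Real.pi) * K * r ^ (N - K) := by
    have hbound : ∀ k ∈ Finset.Ioc 0 K, ‖a k‖ * (2 * Real.pi * r ^ (N - k))
        ≤ C * (2 * Real.pi) * r ^ (N - K) := by
      intro k hk
      rw [Finset.mem_Ioc] at hk
      have h1 : r ^ (N - k) ≤ r ^ (N - K) :=
        pow_le_pow_of_le_one hr0.le hr1.le (by omega)
      calc ‖a k‖ * (2 * Real.pi * r ^ (N - k))
          ≤ C * (2 * Real.pi * r ^ (N - k)) := by
            apply mul_le_mul_of_nonneg_right (hC k) (by positivity)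
        _ ≤ C * (2 * Real.pi * r ^ (N - K)) := by
            apply mul_le_mul_of_nonneg_left (by nlinarith) hC0
        _ = C * (2 * Real.pi) * r ^ (N - K) := by ring
    calc ∑ k ∈ Finset.Ioc 0 K, ‖a k‖ * (2 * Real.pi * r ^ (N - k))
        ≤ (Finset.Ioc 0 K).card • (C * (2 * Real.pi) * r ^ (N - K)) :=
          Finset.sum_le_card_nsmul _ _ _ hbound
      _ = C * (2 * Real.pi) * K * r ^ (N - K) := by
          rw [Nat.card_Ioc, Nat.sub_zero, nsmul_eq_mul]
          ring
  have hpart2 : ∑ k ∈ Finset.Ioc K N, ‖a k‖ * (2 * Real.pi * r ^ (N - k)) ≤ ε/2 := by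
    have hbound : ∀ k ∈ Finset.Ioc K N, ‖a k‖ * (2 * Real.pi * r ^ (N - k))
        ≤ ε1 * (2 * Real.pi) * r ^ (N - k) := by
      intro k hk
      rw [Finset.mem_Ioc] at hk
      have h1 : ‖a k‖ ≤ ε1 := (hK k (by omega)).le
      have h2 : (0:ℝ) ≤ 2 * Real.pi * r ^ (N - k) := by positivity
      calc ‖a k‖ * (2 * Real.pi * r ^ (N - k)) ≤ ε1 * (2 * Real.pi * r ^ (N - k)) :=
            mul_le_mul_of_nonneg_right h1 h2
        _ = ε1 * (2 * Real.pi) * r ^ (N - k) := by ring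
    calc ∑ k ∈ Finset.Ioc K N, ‖a k‖ * (2 * Real.pi * r ^ (N - k))
        ≤ ∑ k ∈ Finset.Ioc K N, ε1 * (2 * Real.pi) * r ^ (N - k) :=
          Finset.sum_le_sum hbound
      _ = ε1 * (2 * Real.pi) * ∑ k ∈ Finset.Ioc K N, r ^ (N - k) := by
          rw [Finset.mul_sum]
      _ ≤ ε1 * (2 * Real.pi) * (1/(1 - r)) := by
          apply mul_le_mul_of_nonneg_left (DN.geom_tail_le hr0.le hr1 K N) (by positivity)
      _ ≤ ε/2 := by
          have h1r : (0:ℝ) < 1 - r := by linarith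
          have hval : ε1 * (2 * Real.pi) * (1/(1 - r)) = ε * (2 * Real.pi) / (4 * Real.pi + 1) := by
            rw [hε1def]
            field_simp
          rw [hval, div_le_div_iff₀ (by positivity) (by norm_num)]
          nlinarith [hε.le, hπ.le]
  calc ‖∑ k ∈ Finset.Icc 1 N, a k * ((DN.fB α m zs)^[k] (pc x) - (DN.fB α m zs)^[k] (pc y))‖
      ≤ ∑ k ∈ Finset.Icc 1 N, ‖a k‖ * (2 * Real.pi * r ^ (N - k)) := hsum1
    _ = _ + _ := by rw [hIcc, hsplit]
    _ < ε/2 + ε/2 := by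
        apply add_lt_add_of_lt_of_le
        · exact lt_of_le_of_lt hpart1 htailN
        · exact hpart2
    _ = ε := by ring

end
end
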